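/- arXiv:2012.11086 — 9 statements merged into one kernel-verified Lean document; each statement's English description precedes it below -/
import Mathlib

section
/- Under the general pulsed stochastic control setup, suppose additionally that the random variable ln 𝓛(α, l, ξ, 0) is integrable and that λ := −E[ln 𝓛(α, l, ξ, 0)] > (k−1)·ln L. Then for every γ ∈ (0,1) there exist δ₀ > 0 and a measurable set Ω_γ ⊆ Ω with P(Ω_γ) > 1−γ such that for every initial value z₀ with |z₀| ≤ δ₀, the solution (z_n) of the pulsed controlled equation satisfies lim_{n→∞} z_n(ω) = 0 for every ω ∈ Ω_γ. -/
open MeasureTheory ProbabilityTheory Filter Topology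

private lemma cesaro_atBot {a : ℕ → ℝ} {μ c : ℝ}
    (h : Tendsto (fun n : ℕ => (∑ j ∈ Finset.range n, a j) / n) atTop (𝓝 μ))
    (hc : μ + c < 0) :
    Tendsto (fun n : ℕ => (∑ j ∈ Finset.range n, a j) + n * c) atTop atBot := by
  set ε : ℝ := -(μ + c) with hε
  have hεpos : 0 < ε := by simp only [hε]; linarith
  have h1 : ∀ᶠ n : ℕ in atTop, (∑ j ∈ Finset.range n, a j) / n < μ + ε / 2 :=
    h.eventually_lt_const (by linarith)
  have h2 : ∀ᶠ n : ℕ in atTop,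
      (∑ j ∈ Finset.range n, a j) + n * c ≤ (n : ℝ) * (-(ε / 2)) := by
    filter_upwards [h1, eventually_ge_atTop 1] with n hn hn1
    have hnpos : (0:ℝ) < n := by exact_mod_cast hn1
    rw [div_lt_iff₀ hnpos] at hn
    nlinarith [hn, hnpos.le]
  exact tendsto_atBot_mono' _ h2
    (tendsto_natCast_atTop_atTop.atTop_mul_const_of_neg (by linarith))

/-- Theorem 1 (main pulsed stochastic stabilization theorem), case of the
Law-of-Large-Numbers condition `λ = -E[ln 𝓛(α,l,ξ,0)] > (k-1) ln L`. -/
theorem stmt_0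
    {Ω : Type*} [MeasurableSpace Ω] (P : Measure Ω) [IsProbabilityMeasure P]
    -- the i.i.d. noise sequence, bounded by 1, with common distribution that of ξ0
    (ξ : ℕ → Ω → ℝ) (ξ0 : Ω → ℝ)
    (hξmeas : ∀ n, Measurable (ξ n)) (hξ0meas : Measurable ξ0)
    (hindep : iIndepFun ξ P)
    (hident : ∀ n, IdentDistrib (ξ n) ξ0 P P)
    (hbound : ∀ n ω, |ξ n ω| ≤ 1) (hbound0 : ∀ ω, |ξ0 ω| ≤ 1)
    -- parameters
    (k : ℕ) (hk : 1 ≤ k)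
    (u₀ : ℝ) (hu₀ : 0 < u₀)
    (L : ℝ) (hL : 1 ≤ L)
    (l₀ : ℝ) (hl₀ : 0 < l₀)
    (α : ℝ) (hα : α ∈ Set.Ico (0:ℝ) 1)
    (l : ℝ) (hl : l ∈ Set.Icc (0:ℝ) l₀)
    -- the uncontrolled map g and the controlled map G
    (g : ℝ → ℝ) (hg : ∀ z : ℝ, |z| ≤ u₀ → |g z| ≤ L * |z|)
    (G : ℝ → ℝ → ℝ → ℝ → ℝ)
    -- the random local Lipschitz factor 𝓛
    (𝓛 : ℝ → ℝ → ℝ → ℝ → ℝ)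
    (h𝓛cont : ContinuousOn (fun p : ℝ × ℝ × ℝ × ℝ => 𝓛 p.1 p.2.1 p.2.2.1 p.2.2.2)
      ((Set.Icc (0:ℝ) 1) ×ˢ (Set.Icc (0:ℝ) l₀) ×ˢ (Set.Icc (-1:ℝ) 1) ×ˢ (Set.Ici (0:ℝ))))
    (h𝓛pos : ∀ α' l' v u : ℝ, α' ∈ Set.Icc (0:ℝ) 1 → l' ∈ Set.Icc (0:ℝ) l₀ → |v| ≤ 1 →
      0 ≤ u → 0 < 𝓛 α' l' v u)
    (hG : ∀ z u α' l' v : ℝ, |z| ≤ u → u ≤ u₀ → α' ∈ Set.Ico (0:ℝ) 1 →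
      l' ∈ Set.Icc (0:ℝ) l₀ → |v| ≤ 1 → |G z α' l' v| ≤ 𝓛 α' l' v u * |z|)
    -- finiteness of the supremum M
    (M : ℝ)
    (hM : IsLUB {y : ℝ | ∃ α' ∈ Set.Ico (0:ℝ) 1, ∃ l' ∈ Set.Icc (0:ℝ) l₀,
      ∃ v ∈ Set.Icc (-1:ℝ) 1, ∃ u ∈ Set.Icc (0:ℝ) u₀, 𝓛 α' l' v u = y} M)
    -- integrability and the expectation condition λ > (k-1) ln L
    (hint : Integrable (fun ω => Real.log (𝓛 α l (ξ0 ω) 0)) P)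
    (hexp : -∫ ω, Real.log (𝓛 α l (ξ0 ω) 0) ∂P > ((k : ℝ) - 1) * Real.log L)
    (γ : ℝ) (hγ : γ ∈ Set.Ioo (0:ℝ) 1) :
    ∃ δ₀ > (0:ℝ), ∃ Ωγ : Set Ω, MeasurableSet Ωγ ∧ P Ωγ > ENNReal.ofReal (1 - γ) ∧
      ∀ z₀ : ℝ, |z₀| ≤ δ₀ →
        ∀ z : ℕ → Ω → ℝ, (∀ ω, z 0 ω = z₀) →
          (∀ n ω, z (n + 1) ω =
            if k ∣ (n + 1) then G (z n ω) α l (ξ (n + 1) ω) else g (z n ω)) →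
          ∀ ω ∈ Ωγ, Tendsto (fun n => z n ω) atTop (nhds 0) := by
  obtain ⟨hα0, hα1⟩ := hα
  have hαIcc : α ∈ Set.Icc (0:ℝ) 1 := ⟨hα0, hα1.le⟩
  have hLpos : (0:ℝ) < L := lt_of_lt_of_le one_pos hL
  have hk0 : 0 < k := hk
  obtain ⟨hγ0, hγ1⟩ := hγ
  -- the clamp function
  set cl : ℝ → ℝ := fun v => max (-1) (min 1 v) with hcl
  have cl_cont : Continuous cl := continuous_const.max (continuous_const.min continuous_id)
  have cl_mem : ∀ v, cl v ∈ Set.Icc (-1:ℝ) 1 := by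
    intro v
    constructor
    · exact le_max_left _ _
    · exact max_le (by norm_num) (min_le_left _ _)
  have cl_eq : ∀ v : ℝ, |v| ≤ 1 → cl v = v := by
    intro v hv
    rcases abs_le.1 hv with ⟨h1, h2⟩
    simp only [hcl]
    rw [min_eq_right h2, max_eq_right h1]
  -- the packaged function and the compact set K
  set Φ : ℝ × ℝ × ℝ × ℝ → ℝ := fun p => 𝓛 p.1 p.2.1 p.2.2.1 p.2.2.2 with hΦ
  set K : Set (ℝ × ℝ × ℝ × ℝ) :=
    {α} ×ˢ ({l} ×ˢ ((Set.Icc (-1:ℝ) 1) ×ˢ (Set.Icc (0:ℝ) u₀))) with hK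
  have hmemK : ∀ v u : ℝ, v ∈ Set.Icc (-1:ℝ) 1 → u ∈ Set.Icc (0:ℝ) u₀ →
      ((α, l, v, u) : ℝ × ℝ × ℝ × ℝ) ∈ K := by
    intro v u hv hu
    exact ⟨rfl, rfl, hv, hu⟩
  have hKsub : K ⊆ (Set.Icc (0:ℝ) 1) ×ˢ (Set.Icc (0:ℝ) l₀) ×ˢ
      (Set.Icc (-1:ℝ) 1) ×ˢ (Set.Ici (0:ℝ)) := by
    rintro ⟨a, b, c, d⟩ ⟨ha, hb, hc, hd⟩
    have ha' : a = α := ha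
    have hb' : b = l := hb
    exact ⟨ha' ▸ hαIcc, hb' ▸ hl, hc, hd.1⟩
  have hKcomp : IsCompact K :=
    isCompact_singleton.prod (isCompact_singleton.prod (isCompact_Icc.prod isCompact_Icc))
  have hKne : K.Nonempty := ⟨(α, l, 0, 0), hmemK 0 0 (by norm_num) ⟨le_refl _, hu₀.le⟩⟩
  have hΦK : ContinuousOn Φ K := h𝓛cont.mono hKsub
  have hΦpos : ∀ p ∈ K, 0 < Φ p := by
    rintro ⟨a, b, c, d⟩ ⟨ha, hb, hc, hd⟩
    have ha' : a = α := ha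
    have hb' : b = l := hb
    exact h𝓛pos a b c d (ha' ▸ hαIcc) (hb' ▸ hl) (abs_le.2 hc) hd.1
  -- min and max of Φ on K
  obtain ⟨pmin, hpminK, hminOn⟩ := hKcomp.exists_isMinOn hKne hΦK
  obtain ⟨pmax, hpmaxK, hmaxOn⟩ := hKcomp.exists_isMaxOn hKne hΦK
  have hmin : ∀ p ∈ K, Φ pmin ≤ Φ p := fun p hp => isMinOn_iff.1 hminOn p hp
  have hmax : ∀ p ∈ K, Φ p ≤ Φ pmax := fun p hp => isMaxOn_iff.1 hmaxOn p hp
  set m : ℝ := Φ pmin with hm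
  have hmpos : 0 < m := hΦpos pmin hpminK
  set B : ℝ := max |Real.log m| |Real.log (Φ pmax)| with hB
  have hboundlog : ∀ p ∈ K, |Real.log (Φ p)| ≤ B := by
    intro p hp
    have hplo : m ≤ Φ p := hmin p hp
    have hphi : Φ p ≤ Φ pmax := hmax p hp
    have hppos : 0 < Φ p := hΦpos p hp
    have h1 : Real.log m ≤ Real.log (Φ p) := (Real.log_le_log_iff hmpos hppos).2 hplo
    have h2 : Real.log (Φ p) ≤ Real.log (Φ pmax) :=
      (Real.log_le_log_iff hppos (hΦpos pmax hpmaxK)).2 hphi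
    rw [abs_le]
    constructor
    · have := neg_abs_le (Real.log m)
      have hB1 : |Real.log m| ≤ B := le_max_left _ _
      linarith
    · have := le_abs_self (Real.log (Φ pmax))
      have hB2 : |Real.log (Φ pmax)| ≤ B := le_max_right _ _
      linarith
  -- constants
  set lam : ℝ := ∫ ω, Real.log (𝓛 α l (ξ0 ω) 0) ∂P with hlam
  set c₀ : ℝ := ((k - 1 : ℕ) : ℝ) * Real.log L with hc₀
  have hc₀eq : c₀ = ((k : ℝ) - 1) * Real.log L := by
    simp only [hc₀]
    rw [Nat.cast_sub hk, Nat.cast_one]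
  have hlamc : lam + c₀ < 0 := by rw [hc₀eq]; linarith [hexp]
  set ε : ℝ := -(lam + c₀) / 2 with hε
  have hεpos : 0 < ε := by simp only [hε]; linarith
  have hexpε : 1 < Real.exp ε := by
    rw [← Real.exp_zero]; exact Real.exp_lt_exp.2 hεpos
  -- choose u⋆ by uniform continuity
  have hUC := hKcomp.uniformContinuousOn_of_continuous hΦK
  rw [Metric.uniformContinuousOn_iff] at hUC
  obtain ⟨δ, hδpos, hδ⟩ := hUC (m * (Real.exp ε - 1)) (by nlinarith)
  set us : ℝ := min u₀ (δ / 2) with hus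
  have huspos : 0 < us := lt_min hu₀ (by linarith)
  have husle : us ≤ u₀ := min_le_left _ _
  have husmem : us ∈ Set.Icc (0:ℝ) u₀ := ⟨huspos.le, husle⟩
  have h0mem : (0:ℝ) ∈ Set.Icc (0:ℝ) u₀ := ⟨le_refl _, hu₀.le⟩
  have hclose : ∀ v ∈ Set.Icc (-1:ℝ) 1,
      dist (Φ (α, l, v, us)) (Φ (α, l, v, 0)) < m * (Real.exp ε - 1) := by
    intro v hv
    apply hδ _ (hmemK v us hv husmem) _ (hmemK v 0 hv h0mem)
    have : dist ((α, l, v, us) : ℝ × ℝ × ℝ × ℝ) (α, l, v, 0) = us := by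
      simp [Prod.dist_eq, Real.dist_eq, abs_of_nonneg huspos.le, huspos.le]
    rw [this]
    calc us ≤ δ / 2 := min_le_right _ _
      _ < δ := by linarith
  have hlog_le : ∀ v : ℝ, |v| ≤ 1 →
      Real.log (𝓛 α l v us) ≤ Real.log (𝓛 α l v 0) + ε := by
    intro v hv
    have hv' : v ∈ Set.Icc (-1:ℝ) 1 := abs_le.1 hv
    have h0pos : 0 < 𝓛 α l v 0 := h𝓛pos α l v 0 hαIcc hl hv (le_refl _)
    have huspos' : 0 < 𝓛 α l v us := h𝓛pos α l v us hαIcc hl hv huspos.le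
    have hm0 : m ≤ 𝓛 α l v 0 := hmin (α, l, v, 0) (hmemK v 0 hv' h0mem)
    have hd := hclose v hv'
    rw [Real.dist_eq] at hd
    have hd' := (abs_lt.1 hd).2
    have hle : 𝓛 α l v us ≤ 𝓛 α l v 0 * Real.exp ε := by nlinarith
    calc Real.log (𝓛 α l v us) ≤ Real.log (𝓛 α l v 0 * Real.exp ε) :=
          (Real.log_le_log_iff huspos' (by positivity)).2 hle
      _ = Real.log (𝓛 α l v 0) + ε := by
          rw [Real.log_mul h0pos.ne' (Real.exp_ne_zero _), Real.log_exp]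
  -- the function F and the random variables Y
  set F : ℝ → ℝ := fun v => Real.log (𝓛 α l (cl v) us) with hF
  have hFcont : Continuous F := by
    have hg1 : Continuous fun v : ℝ => ((α, l, cl v, us) : ℝ × ℝ × ℝ × ℝ) :=
      continuous_const.prodMk (continuous_const.prodMk (cl_cont.prodMk continuous_const))
    have hcont2 : Continuous fun v : ℝ => 𝓛 α l (cl v) us :=
      hΦK.comp_continuous hg1 (fun v => hmemK (cl v) us (cl_mem v) husmem)
    exact hcont2.log fun v =>
      (h𝓛pos α l (cl v) us hαIcc hl (abs_le.2 (cl_mem v)) huspos.le).ne'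
  have hFeq : ∀ v : ℝ, |v| ≤ 1 → F v = Real.log (𝓛 α l v us) := by
    intro v hv; simp only [hF]; rw [cl_eq v hv]
  have hFbound : ∀ v : ℝ, |F v| ≤ B :=
    fun v => hboundlog (α, l, cl v, us) (hmemK (cl v) us (cl_mem v) husmem)
  set Y : ℕ → Ω → ℝ := fun j ω => F (ξ ((j + 1) * k) ω) with hY
  have hYmeas : ∀ j, Measurable (Y j) := fun j => hFcont.measurable.comp (hξmeas _)
  have hYident : ∀ j, IdentDistrib (Y j) (Y 0) P P := fun j =>
    ((hident ((j + 1) * k)).trans (hident ((0 + 1) * k)).symm).comp hFcont.measurable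
  have hYindep : Pairwise (Function.onFun (IndepFun · · P) Y) := by
    intro i j hij
    have hne : (i + 1) * k ≠ (j + 1) * k := by
      intro h
      exact hij (by have := Nat.eq_of_mul_eq_mul_right hk0 h; omega)
    exact (hindep.indepFun hne).comp hFcont.measurable hFcont.measurable
  have hYint : ∀ j, Integrable (Y j) P := by
    intro j
    refine (integrable_const B).mono' ((hYmeas j).aestronglyMeasurable) ?_
    exact ae_of_all _ fun ω => by rw [Real.norm_eq_abs]; exact hFbound _
  have hFξ0int : Integrable (fun ω => F (ξ0 ω)) P := by
    refine (integrable_const B).mono'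
      ((hFcont.measurable.comp hξ0meas).aestronglyMeasurable) ?_
    exact ae_of_all _ fun ω => by rw [Real.norm_eq_abs]; exact hFbound _
  -- expectation bound
  have hμY : ∫ ω, Y 0 ω ∂P = ∫ ω, F (ξ0 ω) ∂P :=
    ((hident ((0 + 1) * k)).comp hFcont.measurable).integral_eq
  have hμle : ∫ ω, Y 0 ω ∂P ≤ lam + ε := by
    rw [hμY]
    have hmono : ∫ ω, F (ξ0 ω) ∂P ≤ ∫ ω, (Real.log (𝓛 α l (ξ0 ω) 0) + ε) ∂P := by
      refine integral_mono hFξ0int (hint.add (integrable_const ε)) fun ω => ?_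
      rw [hFeq _ (hbound0 ω)]
      exact hlog_le _ (hbound0 ω)
    rwa [integral_add hint (integrable_const ε), integral_const, probReal_univ,
      one_smul] at hmono
  -- strong law of large numbers
  have hLLN := ProbabilityTheory.strong_law_ae_real Y (hYint 0) hYindep hYident
  -- the sums T
  set T : ℕ → Ω → ℝ := fun n ω => (∑ j ∈ Finset.range n, Y j ω) + n * c₀ with hT
  have hTmeas : ∀ n, Measurable (T n) := by
    intro n
    exact (Finset.measurable_sum _ fun j _ => hYmeas j).add_const _
  set A : Set Ω := {ω | Tendsto (fun n => T n ω) atTop atBot} with hA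
  have hAmeas : MeasurableSet A := measurableSet_tendsto atBot hTmeas
  have hneg : (∫ ω, Y 0 ω ∂P) + c₀ < 0 := by
    have : lam + c₀ = -(2 * ε) := by simp only [hε]; ring
    linarith
  have hae : ∀ᵐ ω ∂P, ω ∈ A := by
    filter_upwards [hLLN] with ω hω
    exact cesaro_atBot hω hneg
  have hPA : P A = 1 := by
    rw [← prob_compl_eq_zero_iff hAmeas]
    rw [ae_iff] at hae
    exact hae
  -- the sets E N
  set E : ℕ → Set Ω := fun N => A ∩ {ω | ∀ n, T n ω ≤ (N : ℝ)} with hE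
  have hEmeas : ∀ N, MeasurableSet (E N) := by
    intro N
    refine hAmeas.inter ?_
    rw [Set.setOf_forall]
    exact MeasurableSet.iInter fun n => measurableSet_le (hTmeas n) measurable_const
  have hEmono : Monotone E := by
    intro a b hab
    refine Set.inter_subset_inter_right _ fun ω hω n => le_trans (hω n) ?_
    exact_mod_cast hab
  have hEunion : ⋃ N, E N = A := by
    apply subset_antisymm
    · exact Set.iUnion_subset fun N => Set.inter_subset_left
    · intro ω hω
      have hω' : Tendsto (fun n => T n ω) atTop atBot := hω
      obtain ⟨N₀, hN₀⟩ := (tendsto_atBot.1 hω' 0).exists_forall_of_atTop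
      set R : ℝ := (Finset.range (N₀ + 1)).sup' (by simp) fun n => T n ω with hR
      refine Set.mem_iUnion.2 ⟨⌈R⌉₊, hω, fun n => ?_⟩
      rcases le_or_gt n N₀ with h | h
      · have hmemn : n ∈ Finset.range (N₀ + 1) := Finset.mem_range.2 (by omega)
        calc T n ω ≤ R := Finset.le_sup' (fun n => T n ω) hmemn
          _ ≤ (⌈R⌉₊ : ℝ) := Nat.le_ceil R
      · calc T n ω ≤ 0 := hN₀ n h.le
          _ ≤ (⌈R⌉₊ : ℝ) := Nat.cast_nonneg _
  -- pick N
  have htendE := tendsto_measure_iUnion_atTop (μ := P) hEmono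
  rw [hEunion, hPA] at htendE
  have hlt1 : ENNReal.ofReal (1 - γ) < 1 := by
    rw [ENNReal.ofReal_lt_one]; linarith
  obtain ⟨N, hN⟩ := (htendE.eventually (eventually_gt_nhds hlt1)).exists
  -- final constants
  set C : ℝ := (N : ℝ) with hC
  set δ₀ : ℝ := us / (L ^ (k - 1) * Real.exp C) with hδ₀
  have hδ₀pos : 0 < δ₀ := by positivity
  have hδLC : δ₀ * (L ^ (k - 1) * Real.exp C) = us :=
    div_mul_cancel₀ _ (by positivity)
  refine ⟨δ₀, hδ₀pos, E N, hEmeas N, hN, ?_⟩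
  intro z₀ hz₀ z hz0 hrec ω hωE
  obtain ⟨hωA, hωB⟩ := hωE
  have hωA' : Tendsto (fun n => T n ω) atTop atBot := hωA
  have hωB' : ∀ n, T n ω ≤ C := hωB
  -- the key inductive estimate
  have key : ∀ n, |z n ω| ≤ δ₀ * L ^ (n % k) * Real.exp (T (n / k) ω) := by
    intro n
    induction n with
    | zero =>
      have hT0 : T 0 ω = 0 := by simp [hT]
      simpa [hz0, hT0] using hz₀
    | succ n ih =>
      set q := n / k with hq
      set r := n % k with hr
      have hrk : r < k := Nat.mod_lt _ hk0
      have hnqr : n = k * q + r := (Nat.div_add_mod n k).symm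
      have hTqC : T q ω ≤ C := hωB' q
      have hLr : L ^ r ≤ L ^ (k - 1) := pow_le_pow_right₀ hL (by omega)
      have hub : δ₀ * L ^ r * Real.exp (T q ω) ≤ us := by
        calc δ₀ * L ^ r * Real.exp (T q ω)
            ≤ δ₀ * L ^ (k - 1) * Real.exp C := by
              apply mul_le_mul
              · exact mul_le_mul_of_nonneg_left hLr hδ₀pos.le
              · exact Real.exp_le_exp.2 hTqC
              · exact (Real.exp_pos _).le
              · positivity
          _ = us := by rw [mul_assoc]; exact hδLC
      have hzb : |z n ω| ≤ us := le_trans ih hub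
      have hzu₀ : |z n ω| ≤ u₀ := hzb.trans husle
      by_cases hdvd : k ∣ (n + 1)
      · -- controlled step
        have h2 : n + 1 = k * q + (r + 1) := by rw [hnqr, add_assoc]
        have hdvdr : k ∣ r + 1 := by
          have hkq : k ∣ k * q := dvd_mul_right k q
          exact (Nat.dvd_add_right hkq).mp (h2 ▸ hdvd)
        have hr1 : r + 1 = k := by
          have := Nat.le_of_dvd (Nat.succ_pos r) hdvdr
          omega
        have hne : n + 1 = k * (q + 1) := by
          rw [h2, hr1, Nat.mul_add, Nat.mul_one]
        have hdiv' : (n + 1) / k = q + 1 := by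
          rw [hne, Nat.mul_div_cancel_left _ hk0]
        have hmod' : (n + 1) % k = 0 := by rw [hne]; exact Nat.mul_mod_right k (q + 1)
        have hξb := hbound (n + 1) ω
        have hstep : |z (n + 1) ω| ≤ 𝓛 α l (ξ (n + 1) ω) us * |z n ω| := by
          rw [hrec n ω, if_pos hdvd]
          exact hG _ us α l _ hzb husle ⟨hα0, hα1⟩ hl hξb
        have h𝓛exp : 𝓛 α l (ξ (n + 1) ω) us = Real.exp (Y q ω) := by
          have hYq : Y q ω = Real.log (𝓛 α l (ξ (n + 1) ω) us) := by
            show F (ξ ((q + 1) * k) ω) = _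
            rw [show (q + 1) * k = n + 1 by rw [Nat.mul_comm]; exact hne.symm]
            exact hFeq _ (hbound _ _)
          rw [hYq, Real.exp_log (h𝓛pos α l _ us hαIcc hl hξb huspos.le)]
        have hTsucc : T (q + 1) ω = T q ω + Y q ω + c₀ := by
          simp only [hT, Finset.sum_range_succ]
          push_cast
          ring
        have hLpow : (L : ℝ) ^ r = Real.exp c₀ := by
          have hrr : r = k - 1 := by omega
          rw [hrr, hc₀, Real.exp_nat_mul, Real.exp_log hLpos]
        calc |z (n + 1) ω| ≤ Real.exp (Y q ω) * |z n ω| := by rwa [h𝓛exp] at hstep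
          _ ≤ Real.exp (Y q ω) * (δ₀ * L ^ r * Real.exp (T q ω)) :=
              mul_le_mul_of_nonneg_left ih (Real.exp_pos _).le
          _ = δ₀ * L ^ ((n + 1) % k) * Real.exp (T ((n + 1) / k) ω) := by
              rw [hmod', hdiv', hTsucc, hLpow, pow_zero]
              simp only [Real.exp_add]
              ring
      · -- uncontrolled step
        have hr1 : r + 1 < k := by
          rcases Nat.lt_or_ge (r + 1) k with h | h
          · exact h
          · exfalso
            have hreq : r + 1 = k := by omega
            exact hdvd ⟨q + 1, by rw [hnqr, add_assoc, hreq, Nat.mul_add, Nat.mul_one]⟩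
        have h2 : n + 1 = k * q + (r + 1) := by rw [hnqr, add_assoc]
        have hdiv' : (n + 1) / k = q := by
          rw [h2, Nat.mul_add_div hk0, Nat.div_eq_of_lt hr1, add_zero]
        have hmod' : (n + 1) % k = r + 1 := by
          rw [h2, Nat.mul_add_mod, Nat.mod_eq_of_lt hr1]
        have hstep : |z (n + 1) ω| ≤ L * |z n ω| := by
          rw [hrec n ω, if_neg hdvd]
          exact hg _ hzu₀
        calc |z (n + 1) ω| ≤ L * (δ₀ * L ^ r * Real.exp (T q ω)) :=
              le_trans hstep (mul_le_mul_of_nonneg_left ih hLpos.le)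
          _ = δ₀ * L ^ (r + 1) * Real.exp (T q ω) := by rw [pow_succ]; ring
          _ = δ₀ * L ^ ((n + 1) % k) * Real.exp (T ((n + 1) / k) ω) := by
              rw [hmod', hdiv']
  -- conclude convergence
  have hqq : Tendsto (fun n : ℕ => n / k) atTop atTop := by
    refine tendsto_atTop_atTop.2 fun b => ⟨b * k, fun n hn => ?_⟩
    exact (Nat.le_div_iff_mul_le hk0).2 hn
  have hTtend : Tendsto (fun n : ℕ => T (n / k) ω) atTop atBot := hωA'.comp hqq
  have hbnd : Tendsto (fun n : ℕ => δ₀ * L ^ (k - 1) * Real.exp (T (n / k) ω))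
      atTop (𝓝 0) := by
    have h := (Real.tendsto_exp_atBot.comp hTtend).const_mul (δ₀ * L ^ (k - 1))
    simpa using h
  refine squeeze_zero_norm (fun n => ?_) hbnd
  rw [Real.norm_eq_abs]
  calc |z n ω| ≤ δ₀ * L ^ (n % k) * Real.exp (T (n / k) ω) := key n
    _ ≤ δ₀ * L ^ (k - 1) * Real.exp (T (n / k) ω) := by
        apply mul_le_mul_of_nonneg_right _ (Real.exp_pos _).le
        exact mul_le_mul_of_nonneg_left
          (pow_le_pow_right₀ hL (by have := Nat.mod_lt n hk0; omega)) hδ₀pos.le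
    _ = δ₀ * L ^ (k - 1) * Real.exp (T (n / k) ω) := rfl
end

section
/- Under the general pulsed stochastic control setup, if M·L^{k−1} < 1, then for every initial value z₀ with |z₀| ≤ u₀ / L^{k−1}, the solution (z_n) of the pulsed controlled equation satisfies lim_{n→∞} z_n(ω) = 0 for every ω ∈ Ω. Moreover, for every u ∈ (0, u₀] and |z₀| ≤ u / L^{k−1}, one has |z_{ik+j}(ω)| ≤ (M·L^{k−1})^i · u for all i ∈ ℕ, j ∈ {0,1,…,k−1} and all ω ∈ Ω. -/
open MeasureTheory ProbabilityTheory Filter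

/-- Theorem 1, case (a): if `M·L^{k-1} < 1`, the pulsed controlled sequence converges
to zero for every `ω ∈ Ω` whenever `|z₀| ≤ u₀/L^{k-1}`, with the explicit geometric
bounds `|z_{ik+j}| ≤ (M L^{k-1})^i u`. -/
theorem stmt_1
    {Ω : Type*} [MeasurableSpace Ω] (P : Measure Ω) [IsProbabilityMeasure P]
    (ξ : ℕ → Ω → ℝ)
    (hξmeas : ∀ n, Measurable (ξ n))
    (hindep : iIndepFun ξ P)
    (hident : ∀ n m, IdentDistrib (ξ n) (ξ m) P P)
    (hbound : ∀ n ω, |ξ n ω| ≤ 1)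
    (k : ℕ) (hk : 1 ≤ k)
    (u₀ : ℝ) (hu₀ : 0 < u₀)
    (L : ℝ) (hL : 1 ≤ L)
    (l₀ : ℝ) (hl₀ : 0 < l₀)
    (α : ℝ) (hα : α ∈ Set.Ico (0:ℝ) 1)
    (l : ℝ) (hl : l ∈ Set.Icc (0:ℝ) l₀)
    (g : ℝ → ℝ) (hg : ∀ z : ℝ, |z| ≤ u₀ → |g z| ≤ L * |z|)
    (G : ℝ → ℝ → ℝ → ℝ → ℝ)
    (𝓛 : ℝ → ℝ → ℝ → ℝ → ℝ)
    (h𝓛cont : ContinuousOn (fun p : ℝ × ℝ × ℝ × ℝ => 𝓛 p.1 p.2.1 p.2.2.1 p.2.2.2)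
      ((Set.Icc (0:ℝ) 1) ×ˢ (Set.Icc (0:ℝ) l₀) ×ˢ (Set.Icc (-1:ℝ) 1) ×ˢ (Set.Ici (0:ℝ))))
    (h𝓛pos : ∀ α' l' v u : ℝ, α' ∈ Set.Icc (0:ℝ) 1 → l' ∈ Set.Icc (0:ℝ) l₀ → |v| ≤ 1 →
      0 ≤ u → 0 < 𝓛 α' l' v u)
    (hG : ∀ z u α' l' v : ℝ, |z| ≤ u → u ≤ u₀ → α' ∈ Set.Ico (0:ℝ) 1 →
      l' ∈ Set.Icc (0:ℝ) l₀ → |v| ≤ 1 → |G z α' l' v| ≤ 𝓛 α' l' v u * |z|)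
    (M : ℝ)
    (hM : IsLUB {y : ℝ | ∃ α' ∈ Set.Ico (0:ℝ) 1, ∃ l' ∈ Set.Icc (0:ℝ) l₀,
      ∃ v ∈ Set.Icc (-1:ℝ) 1, ∃ u ∈ Set.Icc (0:ℝ) u₀, 𝓛 α' l' v u = y} M)
    (hML : M * L ^ (k - 1) < 1)
    (z₀ : ℝ) (z : ℕ → Ω → ℝ) (hz0 : ∀ ω, z 0 ω = z₀)
    (hrec : ∀ n ω, z (n + 1) ω =
      if k ∣ (n + 1) then G (z n ω) α l (ξ (n + 1) ω) else g (z n ω)) :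
    (|z₀| ≤ u₀ / L ^ (k - 1) → ∀ ω, Tendsto (fun n => z n ω) atTop (nhds 0)) ∧
    (∀ u : ℝ, 0 < u → u ≤ u₀ → |z₀| ≤ u / L ^ (k - 1) →
      ∀ i j : ℕ, j < k → ∀ ω, |z (i * k + j) ω| ≤ (M * L ^ (k - 1)) ^ i * u) := by

  have hk0 : 0 < k := hk
  have hLk1 : (1:ℝ) ≤ L ^ (k-1) := one_le_pow₀ hL
  have hLkpos : (0:ℝ) < L ^ (k-1) := lt_of_lt_of_le one_pos hLk1
  have hL0 : (0:ℝ) ≤ L := le_trans zero_le_one hL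
  have hMpos : 0 < M := by
    have hmem : 𝓛 α l 0 0 ∈ {y : ℝ | ∃ α' ∈ Set.Ico (0:ℝ) 1, ∃ l' ∈ Set.Icc (0:ℝ) l₀,
        ∃ v ∈ Set.Icc (-1:ℝ) 1, ∃ u ∈ Set.Icc (0:ℝ) u₀, 𝓛 α' l' v u = y} :=
      ⟨α, hα, l, hl, 0, by norm_num, 0, ⟨le_refl _, hu₀.le⟩, rfl⟩
    exact lt_of_lt_of_le (h𝓛pos α l 0 0 ⟨hα.1, hα.2.le⟩ hl (by norm_num) le_rfl) (hM.1 hmem)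
  set q := M * L ^ (k-1) with hqdef
  have hq0 : 0 ≤ q := le_of_lt (mul_pos hMpos hLkpos)
  -- deterministic growth within a block
  have block : ∀ ω (m : ℕ) (c : ℝ), 0 ≤ c → c * L^(k-1) ≤ u₀ →
      |z (m*k) ω| ≤ c → ∀ j, j < k → |z (m*k+j) ω| ≤ L^j * c := by
    intro ω m c hc hcu h0 j hj
    induction j with
    | zero => simpa using h0
    | succ j ih =>
      have hjk : j < k := Nat.lt_of_succ_lt hj
      have hz : |z (m*k+j) ω| ≤ L^j * c := ih hjk
      have hndvd : ¬ k ∣ (m*k+j+1) := by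
        intro hd
        have h1 : k ∣ (j+1) := by
          have hmk : k ∣ m*k := dvd_mul_left k m
          exact (Nat.dvd_add_right hmk).mp (by simpa [Nat.add_assoc] using hd)
        exact absurd (Nat.le_of_dvd (Nat.succ_pos _) h1) (not_le.mpr hj)
      have hrw : z (m*k + (j+1)) ω = g (z (m*k+j) ω) := by
        have h2 := hrec (m*k+j) ω
        rw [if_neg (by simpa [Nat.add_assoc] using hndvd)] at h2
        simpa [Nat.add_assoc] using h2
      have hle : |z (m*k+j) ω| ≤ u₀ := by
        calc |z (m*k+j) ω| ≤ L^j * c := hz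
        _ ≤ L^(k-1) * c :=
              mul_le_mul_of_nonneg_right (pow_le_pow_right₀ hL (Nat.le_pred_of_lt hjk)) hc
        _ = c * L^(k-1) := mul_comm _ _
        _ ≤ u₀ := hcu
      calc |z (m*k+(j+1)) ω| = |g (z (m*k+j) ω)| := by rw [hrw]
      _ ≤ L * |z (m*k+j) ω| := hg _ hle
      _ ≤ L * (L^j * c) := by gcongr
      _ = L^(j+1) * c := by ring
  -- the pulsed step
  have step : ∀ ω (m : ℕ) (c : ℝ), 0 ≤ c → c * L^(k-1) ≤ u₀ →
      |z (m*k) ω| ≤ c → |z ((m+1)*k) ω| ≤ q * c := by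
    intro ω m c hc hcu h0
    have hk1 : k - 1 < k := Nat.sub_lt hk0 one_pos
    have hlast : |z (m*k+(k-1)) ω| ≤ L^(k-1) * c := block ω m c hc hcu h0 (k-1) hk1
    have hidx : m*k + (k-1) + 1 = (m+1)*k := by
      have hkk : k - 1 + 1 = k := Nat.succ_pred_eq_of_pos hk0
      rw [Nat.add_assoc, hkk]
      exact (Nat.succ_mul m k).symm
    have hdvd : k ∣ m*k + (k-1) + 1 := by rw [hidx]; exact dvd_mul_left k (m+1)
    have hrw : z ((m+1)*k) ω = G (z (m*k+(k-1)) ω) α l (ξ ((m+1)*k) ω) := by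
      have h2 := hrec (m*k+(k-1)) ω
      rw [if_pos hdvd] at h2
      rw [hidx] at h2
      exact h2
    set v := ξ ((m+1)*k) ω with hv
    have hvb : |v| ≤ 1 := hbound _ _
    have hu'le : L^(k-1) * c ≤ u₀ := by rwa [mul_comm]
    have hGb := hG (z (m*k+(k-1)) ω) (L^(k-1)*c) α l v hlast hu'le hα hl hvb
    have h𝓛M : 𝓛 α l v (L^(k-1)*c) ≤ M :=
      hM.1 ⟨α, hα, l, hl, v, abs_le.mp hvb, L^(k-1)*c,
        ⟨mul_nonneg hLkpos.le hc, hu'le⟩, rfl⟩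
    have h𝓛nn : 0 ≤ 𝓛 α l v (L^(k-1)*c) :=
      (h𝓛pos α l v (L^(k-1)*c) ⟨hα.1, hα.2.le⟩ hl hvb (mul_nonneg hLkpos.le hc)).le
    calc |z ((m+1)*k) ω| = |G (z (m*k+(k-1)) ω) α l v| := by rw [hrw]
    _ ≤ 𝓛 α l v (L^(k-1)*c) * |z (m*k+(k-1)) ω| := hGb
    _ ≤ M * (L^(k-1) * c) := mul_le_mul h𝓛M hlast (abs_nonneg _) hMpos.le
    _ = q * c := by rw [hqdef]; ring
  -- main geometric bound at block starts
  have main : ∀ u : ℝ, 0 < u → u ≤ u₀ → |z₀| ≤ u / L^(k-1) →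
      ∀ ω (i : ℕ), |z (i*k) ω| ≤ q^i * u / L^(k-1) := by
    intro u hu huu hz₀ ω i
    induction i with
    | zero => simpa [hz0 ω] using hz₀
    | succ i ih =>
      have hc : 0 ≤ q^i * u / L^(k-1) :=
        div_nonneg (mul_nonneg (pow_nonneg hq0 i) hu.le) hLkpos.le
      have hcu : (q^i * u / L^(k-1)) * L^(k-1) ≤ u₀ := by
        rw [div_mul_cancel₀ _ (ne_of_gt hLkpos)]
        calc q^i * u ≤ 1 * u := by
              gcongr
              exact pow_le_one₀ hq0 hML.le
        _ = u := one_mul u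
        _ ≤ u₀ := huu
      have := step ω i (q^i * u / L^(k-1)) hc hcu ih
      calc |z ((i+1)*k) ω| ≤ q * (q^i * u / L^(k-1)) := this
      _ = q^(i+1) * u / L^(k-1) := by rw [pow_succ]; ring
  have bounds : ∀ u : ℝ, 0 < u → u ≤ u₀ → |z₀| ≤ u / L^(k-1) →
      ∀ (i j : ℕ), j < k → ∀ ω, |z (i*k+j) ω| ≤ q^i * u := by
    intro u hu huu hz₀ i j hj ω
    have hc : 0 ≤ q^i * u / L^(k-1) :=
      div_nonneg (mul_nonneg (pow_nonneg hq0 i) hu.le) hLkpos.le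
    have hcu : (q^i * u / L^(k-1)) * L^(k-1) ≤ u₀ := by
      rw [div_mul_cancel₀ _ (ne_of_gt hLkpos)]
      calc q^i * u ≤ 1 * u := by
            gcongr
            exact pow_le_one₀ hq0 hML.le
      _ = u := one_mul u
      _ ≤ u₀ := huu
    have hb := block ω i (q^i * u / L^(k-1)) hc hcu (main u hu huu hz₀ ω i) j hj
    calc |z (i*k+j) ω| ≤ L^j * (q^i * u / L^(k-1)) := hb
    _ ≤ L^(k-1) * (q^i * u / L^(k-1)) :=
          mul_le_mul_of_nonneg_right (pow_le_pow_right₀ hL (Nat.le_pred_of_lt hj)) hc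
    _ = q^i * u := by field_simp
  refine ⟨?_, fun u hu huu hz₀ i j hj ω => bounds u hu huu hz₀ i j hj ω⟩
  intro hz₀ ω
  have hb : ∀ n : ℕ, |z n ω| ≤ q^(n/k) * u₀ := by
    intro n
    have h := bounds u₀ hu₀ le_rfl hz₀ (n/k) (n%k) (Nat.mod_lt n hk0) ω
    rwa [Nat.div_add_mod'] at h
  have h1 : Tendsto (fun n : ℕ => n / k) atTop atTop := by
    apply tendsto_atTop_atTop.mpr
    intro b
    exact ⟨b*k, fun n hn => (Nat.le_div_iff_mul_le hk0).mpr hn⟩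
  have h2 := ((tendsto_pow_atTop_nhds_zero_of_lt_one hq0 hML).comp h1).mul_const u₀
  rw [zero_mul] at h2
  exact squeeze_zero_norm (fun n => by simpa [Real.norm_eq_abs] using hb n) h2
end

section
/- Consider the pulsed stochastic TOC sequence with target K. Assume |f(z+K) − K| ≤ L·|z| for all |z| ≤ u₀ (with L ≥ 1), that ln|1 − α − l·ξ| is integrable, and that −E[ln|1 − α − l·ξ|] > k·ln L. Then for every γ ∈ (0,1) there exist δ₀ > 0 and a measurable set Ω_γ ⊆ Ω with P(Ω_γ) > 1−γ such that every solution (x_n) with |x₀ − K| ≤ δ₀ satisfies lim_{n→∞} x_n(ω) = K for every ω ∈ Ω_γ. -/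
open MeasureTheory ProbabilityTheory Filter
open Topology

/-- Theorem 2: local stabilization of a point equilibrium `K` by pulsed stochastic
Target-Oriented Control with target `K`, under the condition
`-E[ln|1 − α − l ξ|] > k ln L`. -/
theorem stmt_4
    {Ω : Type*} [MeasurableSpace Ω] (P : Measure Ω) [IsProbabilityMeasure P]
    (ξ : ℕ → Ω → ℝ) (ξ0 : Ω → ℝ)
    (hξmeas : ∀ n, Measurable (ξ n)) (hξ0meas : Measurable ξ0)
    (hindep : iIndepFun ξ P)
    (hident : ∀ n, IdentDistrib (ξ n) ξ0 P P)
    (hbound : ∀ n ω, |ξ n ω| ≤ 1) (hbound0 : ∀ ω, |ξ0 ω| ≤ 1)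
    (f : ℝ → ℝ) (hfpos : ∀ x, 0 ≤ f x)
    (K : ℝ) (hKpos : 0 < K) (hfK : f K = K)
    (k : ℕ) (hk : 1 ≤ k)
    (α : ℝ) (hα : α ∈ Set.Ico (0:ℝ) 1) (l : ℝ) (hl : 0 ≤ l)
    (u₀ : ℝ) (hu₀ : 0 < u₀) (L : ℝ) (hL : 1 ≤ L)
    (hLip : ∀ z : ℝ, |z| ≤ u₀ → |f (z + K) - K| ≤ L * |z|)
    (hint : Integrable (fun ω => Real.log |1 - α - l * ξ0 ω|) P)
    (hexp : -∫ ω, Real.log |1 - α - l * ξ0 ω| ∂P > (k : ℝ) * Real.log L)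
    (γ : ℝ) (hγ : γ ∈ Set.Ioo (0:ℝ) 1) :
    ∃ δ₀ > (0:ℝ), ∃ Ωγ : Set Ω, MeasurableSet Ωγ ∧ P Ωγ > ENNReal.ofReal (1 - γ) ∧
      ∀ x₀ : ℝ, |x₀ - K| ≤ δ₀ →
        ∀ x : ℕ → Ω → ℝ, (∀ ω, x 0 ω = x₀) →
          (∀ n ω, x (n + 1) ω =
            if k ∣ (n + 1) then
              (1 - α - l * ξ (n + 1) ω) * f (x n ω) + (α + l * ξ (n + 1) ω) * K
            else f (x n ω)) →
          ∀ ω ∈ Ωγ, Tendsto (fun n => x n ω) atTop (nhds K) := by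
  obtain ⟨hγ0, hγ1⟩ := hγ
  have hkpos : 0 < k := hk
  have hL0 : (0:ℝ) < L := lt_of_lt_of_le one_pos hL
  -- the log-factor function
  set g : ℝ → ℝ := fun t => Real.log |1 - α - l * t| with hgdef
  have hgmeas : Measurable g := by
    apply Real.measurable_log.comp
    exact (measurable_const.sub (measurable_id.const_mul l)).abs
  -- iid sequence of log factors at pulse times
  set X : ℕ → Ω → ℝ := fun j ω => g (ξ ((j + 1) * k) ω) with hXdef
  have hXmeas : ∀ j, Measurable (X j) := fun j => hgmeas.comp (hξmeas _)
  have hident' : ∀ j, IdentDistrib (X j) (fun ω => g (ξ0 ω)) P P := fun j =>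
    (hident ((j + 1) * k)).comp hgmeas
  have hXident : ∀ j, IdentDistrib (X j) (X 0) P P := fun j =>
    (hident' j).trans (hident' 0).symm
  have hXint : Integrable (X 0) P := (hident' 0).integrable_iff.mpr hint
  have hXindep : Pairwise (Function.onFun (IndepFun · · P) X) := by
    intro i j hij
    have hne : (i + 1) * k ≠ (j + 1) * k := by
      intro h
      have := Nat.eq_of_mul_eq_mul_right hkpos h
      omega
    exact (hindep.indepFun hne).comp hgmeas hgmeas
  -- strong law of large numbers
  have hslln := strong_law_ae_real X hXint hXindep hXident
  have hmean : (∫ ω, X 0 ω ∂P) = ∫ ω, Real.log |1 - α - l * ξ0 ω| ∂P :=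
    (hident' 0).integral_eq
  -- partial sums with drift
  set S : ℕ → Ω → ℝ := fun s ω =>
    (∑ j ∈ Finset.range s, X j ω) + s * ((k : ℝ) * Real.log L) with hSdef
  have hSmeas : ∀ s, Measurable (fun ω => S s ω) := by
    intro s
    exact (Finset.measurable_sum _ fun j _ => hXmeas j).add measurable_const
  -- a.e. the partial sums tend to -∞
  set c : ℝ := (∫ ω, X 0 ω ∂P) + (k : ℝ) * Real.log L with hcdef
  have hc : c < 0 := by rw [hcdef, hmean]; linarith
  have hSbot_ae : ∀ᵐ ω ∂P, Tendsto (fun s => S s ω) atTop atBot := by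
    filter_upwards [hslln] with ω hω
    have h1 : Tendsto (fun s : ℕ => (∑ j ∈ Finset.range s, X j ω) / s + (k : ℝ) * Real.log L)
        atTop (𝓝 c) := by
      simpa [hcdef] using hω.add_const ((k : ℝ) * Real.log L)
    have h2 : ∀ᶠ s : ℕ in atTop,
        (∑ j ∈ Finset.range s, X j ω) / s + (k : ℝ) * Real.log L ≤ c / 2 := by
      exact h1.eventually (eventually_le_nhds (by linarith))
    apply tendsto_atBot_mono' _ _ (tendsto_natCast_atTop_atTop.const_mul_atTop_of_neg
      (show c / 2 < 0 by linarith))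
    filter_upwards [h2, eventually_gt_atTop 0] with s hs hs0
    have hspos : (0:ℝ) < (s:ℝ) := by exact_mod_cast hs0
    have : S s ω = ((∑ j ∈ Finset.range s, X j ω) / s + (k : ℝ) * Real.log L) * s := by
      field_simp [hSdef]
      ring
    rw [this]
    exact mul_le_mul_of_nonneg_right hs hspos.le
  -- the measurable set where partial sums tend to -∞
  set B : Set Ω := {ω | Tendsto (fun s => S s ω) atTop atBot} with hBdef
  have hBmeas : MeasurableSet B := measurableSet_tendsto atBot hSmeas
  have hB0 : P Bᶜ = 0 := by
    have : Bᶜ = {ω | ¬ Tendsto (fun s => S s ω) atTop atBot} := by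
      rw [hBdef, Set.compl_setOf]
    rw [this]
    exact ae_iff.mp hSbot_ae
  have hB1 : P B = 1 := (prob_compl_eq_zero_iff hBmeas).mp hB0
  -- sets on which the partial sums are uniformly bounded
  set A : ℕ → Set Ω := fun C => {ω | ∀ s, S s ω ≤ (C : ℝ)} with hAdef
  have hAmeas : ∀ C, MeasurableSet (A C) := by
    intro C
    have : A C = ⋂ s, {ω | S s ω ≤ (C : ℝ)} := by
      ext ω; simp [hAdef, Set.mem_iInter]
    rw [this]
    exact MeasurableSet.iInter fun s => measurableSet_le (hSmeas s) measurable_const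
  have hAmono : Monotone A := by
    intro C C' hCC ω hω s
    exact le_trans (hω s) (by exact_mod_cast Nat.cast_le.mpr hCC)
  have hBsubA : B ⊆ ⋃ C, A C := by
    intro ω hω
    have h0 : ∀ᶠ s : ℕ in atTop, S s ω ≤ 0 := tendsto_atBot.mp hω 0
    obtain ⟨N, hN⟩ := eventually_atTop.mp h0
    set M : ℝ := ((Finset.range (N + 1)).image fun s => S s ω).max'
      (by simp [Finset.image_nonempty]) with hMdef
    refine Set.mem_iUnion.mpr ⟨⌈M⌉₊, fun s => ?_⟩
    rcases le_or_gt s N with hsN | hsN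
    · have hmem : S s ω ∈ (Finset.range (N + 1)).image fun s => S s ω :=
        Finset.mem_image_of_mem _ (Finset.mem_range.mpr (Nat.lt_succ_of_le hsN))
      exact (Finset.le_max' _ _ hmem).trans (Nat.le_ceil M)
    · exact (hN s (by omega)).trans (by positivity)
  -- choose C such that P (A C) is large
  have hU1 : P (⋃ C, A C) = 1 := by
    refine le_antisymm prob_le_one ?_
    rw [← hB1]
    exact measure_mono hBsubA
  have htm : Tendsto (fun C => P (A C)) atTop (𝓝 (P (⋃ C, A C))) :=
    tendsto_measure_iUnion_atTop hAmono
  have hev : ∀ᶠ C : ℕ in atTop, ENNReal.ofReal (1 - γ) < P (A C) := by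
    refine htm.eventually (eventually_gt_nhds ?_)
    rw [hU1]
    exact ENNReal.ofReal_lt_one.mpr (by linarith)
  obtain ⟨C, hC⟩ := hev.exists
  -- the sets and constants
  set δ₀ : ℝ := u₀ * Real.exp (-(C : ℝ)) / L ^ k with hδdef
  have hδpos : 0 < δ₀ := by positivity
  refine ⟨δ₀, hδpos, A C ∩ B, (hAmeas C).inter hBmeas, ?_, ?_⟩
  · rwa [measure_inter_conull hB0]
  intro x₀ hx₀ x hx0 hxstep ω hω
  obtain ⟨hωA, hωB⟩ := hω
  have hS_le : ∀ s, S s ω ≤ (C : ℝ) := hωA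
  have hSbot : Tendsto (fun s => S s ω) atTop atBot := hωB
  -- the key uniform bound
  have hkey : ∀ s (r : ℕ), r < k → δ₀ * L ^ r * Real.exp (S s ω) ≤ u₀ / L := by
    intro s r hrk
    have h1 : δ₀ * L ^ r * Real.exp (S s ω) ≤ δ₀ * L ^ (k - 1) * Real.exp (C : ℝ) := by
      have hLr : L ^ r ≤ L ^ (k - 1) := pow_le_pow_right₀ hL (by omega)
      have hse : Real.exp (S s ω) ≤ Real.exp (C : ℝ) := Real.exp_le_exp.mpr (hS_le s)
      exact mul_le_mul (mul_le_mul_of_nonneg_left hLr hδpos.le) hse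
        (Real.exp_pos _).le (by positivity)
    refine h1.trans_eq ?_
    have hkk : L ^ k = L ^ (k - 1) * L := by
      rw [← pow_succ]
      congr 1
      omega
    rw [hδdef, hkk, Real.exp_neg]
    have he : Real.exp (C : ℝ) ≠ 0 := (Real.exp_pos _).ne'
    have hLne : L ≠ 0 := hL0.ne'
    have hLp : L ^ (k - 1) ≠ 0 := pow_ne_zero _ hLne
    field_simp
  -- main induction
  have key : ∀ n, |x n ω - K| ≤ δ₀ * L ^ (n % k) * Real.exp (S (n / k) ω) := by
    intro n
    induction n with
    | zero =>
      have hS0 : S 0 ω = 0 := by simp [hSdef]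
      rw [hx0 ω]
      simpa [hS0] using hx₀
    | succ n ih =>
      set s := n / k with hsdef
      set r := n % k with hrdef
      have hrk : r < k := Nat.mod_lt _ hkpos
      have hnd : n = k * s + r := (Nat.div_add_mod n k).symm
      have hBu : δ₀ * L ^ r * Real.exp (S s ω) ≤ u₀ / L := hkey s r hrk
      have hxu : |x n ω - K| ≤ u₀ :=
        ih.trans (hBu.trans (div_le_self hu₀.le hL))
      have hLipn : |f (x n ω) - K| ≤ L * |x n ω - K| := by
        have := hLip (x n ω - K) hxu
        simpa using this
      by_cases hdvd : k ∣ (n + 1)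
      · -- pulse step
        have hns : n + 1 = k * s + (r + 1) := by rw [hnd, Nat.add_assoc]
        have hdr : k ∣ r + 1 := by
          rw [hns] at hdvd
          exact (Nat.dvd_add_right ⟨s, rfl⟩).mp hdvd
        have hrk1 : r + 1 = k :=
          le_antisymm (by omega) (Nat.le_of_dvd (by omega) hdr)
        have hn1 : n + 1 = (s + 1) * k := by
          rw [hns, hrk1, add_mul, one_mul, mul_comm k s]
        have hdiv : (n + 1) / k = s + 1 := by rw [hn1, Nat.mul_div_cancel _ hkpos]
        have hmod : (n + 1) % k = 0 := by rw [hn1]; exact Nat.mul_mod_left _ _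
        set t : ℝ := 1 - α - l * ξ (n + 1) ω with htdef
        have hxn1 : x (n + 1) ω - K = t * (f (x n ω) - K) := by
          rw [hxstep n ω, if_pos hdvd]; ring
        have hXid : X s ω = Real.log |t| := by
          rw [hXdef]
          simp only [htdef]
          rw [show (s + 1) * k = n + 1 from hn1.symm]
        have habs : |t| ≤ Real.exp (X s ω) := by
          rw [hXid]; exact Real.le_exp_log _
        have hSsucc : Real.exp (S (s + 1) ω)
            = Real.exp (S s ω) * Real.exp (X s ω) * L ^ k := by
          have h1 : S (s + 1) ω = S s ω + X s ω + (k : ℝ) * Real.log L := by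
            simp only [hSdef, Finset.sum_range_succ]
            push_cast
            ring
          rw [h1, Real.exp_add, Real.exp_add, Real.exp_nat_mul, Real.exp_log hL0]
        rw [hdiv, hmod, pow_zero, mul_one]
        calc |x (n + 1) ω - K| = |t| * |f (x n ω) - K| := by rw [hxn1, abs_mul]
          _ ≤ |t| * (L * |x n ω - K|) :=
              mul_le_mul_of_nonneg_left hLipn (abs_nonneg t)
          _ ≤ Real.exp (X s ω) * (L * |x n ω - K|) := by
              apply mul_le_mul_of_nonneg_right habs
              positivity
          _ ≤ Real.exp (X s ω) * (L * (δ₀ * L ^ r * Real.exp (S s ω))) := by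
              apply mul_le_mul_of_nonneg_left _ (Real.exp_pos _).le
              exact mul_le_mul_of_nonneg_left ih hL0.le
          _ = δ₀ * Real.exp (S (s + 1) ω) := by
              rw [hSsucc, show L ^ k = L ^ r * L from by rw [← hrk1, pow_succ]]
              ring
      · -- free-running step
        have hr1 : r + 1 < k := by
          rcases Nat.lt_or_ge (r + 1) k with h | h
          · exact h
          · exfalso
            have hreq : r + 1 = k := by omega
            exact hdvd ⟨s + 1, by rw [Nat.mul_succ, hnd, Nat.add_assoc, hreq]⟩
        have hn1 : n + 1 = (r + 1) + s * k := by
          rw [hnd, mul_comm k s]; ring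
        have hdiv : (n + 1) / k = s := by
          rw [hn1, Nat.add_mul_div_right _ _ hkpos, Nat.div_eq_of_lt hr1, zero_add]
        have hmod : (n + 1) % k = r + 1 := by
          rw [hn1, Nat.add_mul_mod_self_right, Nat.mod_eq_of_lt hr1]
        have hxn1 : x (n + 1) ω = f (x n ω) := by rw [hxstep n ω, if_neg hdvd]
        rw [hdiv, hmod, hxn1, pow_succ]
        calc |f (x n ω) - K| ≤ L * |x n ω - K| := hLipn
          _ ≤ L * (δ₀ * L ^ r * Real.exp (S s ω)) :=
              mul_le_mul_of_nonneg_left ih hL0.le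
          _ = δ₀ * (L ^ r * L) * Real.exp (S s ω) := by ring
  -- conclude convergence
  have hdivtop : Tendsto (fun n : ℕ => n / k) atTop atTop := by
    apply tendsto_atTop_atTop.mpr
    intro b
    exact ⟨b * k, fun n hn => (Nat.le_div_iff_mul_le hkpos).mpr hn⟩
  have hgto : Tendsto (fun n : ℕ => δ₀ * L ^ k * Real.exp (S (n / k) ω))
      atTop (𝓝 0) := by
    have h1 : Tendsto (fun n : ℕ => S (n / k) ω) atTop atBot := hSbot.comp hdivtop
    have h2 := Real.tendsto_exp_atBot.comp h1
    simpa using h2.const_mul (δ₀ * L ^ k)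
  rw [tendsto_iff_dist_tendsto_zero]
  apply squeeze_zero (fun n => dist_nonneg) _ hgto
  intro n
  rw [Real.dist_eq]
  refine (key n).trans ?_
  exact mul_le_mul_of_nonneg_right
    (mul_le_mul_of_nonneg_left (pow_le_pow_right₀ hL (Nat.mod_lt _ hkpos).le) hδpos.le)
    (Real.exp_pos _).le
end

section
/- Consider the pulsed stochastic TOC sequence with target K, and assume the global Lipschitz condition |f(z+K) − K| ≤ L̄·|z| for all z ∈ ℝ (with L̄ ≥ 1). If ln|1 − α − l·ξ| is integrable and −E[ln|1 − α − l·ξ|] > k·ln L̄, then for every initial value x₀ > 0 and every γ ∈ (0,1) there exists a measurable set Ω_γ ⊆ Ω with P(Ω_γ) > 1−γ such that lim_{n→∞} x_n(ω) = K for every ω ∈ Ω_γ; if in addition (1−α+l)·L̄·L̄^{k−1} < 1, then lim_{n→∞} x_n(ω) = K for every ω ∈ Ω. -/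
open MeasureTheory ProbabilityTheory Filter Finset

/-- Theorem 4 (global version, point equilibrium): under a global Lipschitz condition
`|f(z+K) − K| ≤ L̄|z|` and `-E[ln|1−α−lξ|] > k ln L̄`, pulsed stochastic TOC globally
stabilizes `K` with any prescribed probability `1−γ`; if moreover
`(1−α+l)·L̄·L̄^{k−1} < 1`, convergence holds for every `ω ∈ Ω`. -/
theorem stmt_9
    {Ω : Type*} [MeasurableSpace Ω] (P : Measure Ω) [IsProbabilityMeasure P]
    (ξ : ℕ → Ω → ℝ) (ξ0 : Ω → ℝ)
    (hξmeas : ∀ n, Measurable (ξ n)) (hξ0meas : Measurable ξ0)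
    (hindep : iIndepFun ξ P)
    (hident : ∀ n, IdentDistrib (ξ n) ξ0 P P)
    (hbound : ∀ n ω, |ξ n ω| ≤ 1) (hbound0 : ∀ ω, |ξ0 ω| ≤ 1)
    (f : ℝ → ℝ) (hfpos : ∀ x, 0 ≤ f x)
    (K : ℝ) (hKpos : 0 < K) (hfK : f K = K)
    (k : ℕ) (hk : 1 ≤ k)
    (α : ℝ) (hα : α ∈ Set.Ico (0:ℝ) 1) (l : ℝ) (hl : 0 ≤ l)
    (Lb : ℝ) (hLb : 1 ≤ Lb)
    (hLip : ∀ z : ℝ, |f (z + K) - K| ≤ Lb * |z|)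
    (hint : Integrable (fun ω => Real.log |1 - α - l * ξ0 ω|) P)
    (hexp : -∫ ω, Real.log |1 - α - l * ξ0 ω| ∂P > (k : ℝ) * Real.log Lb)
    (x₀ : ℝ) (hx₀ : 0 < x₀)
    (x : ℕ → Ω → ℝ) (hx0 : ∀ ω, x 0 ω = x₀)
    (hrec : ∀ n ω, x (n + 1) ω =
      if k ∣ (n + 1) then
        (1 - α - l * ξ (n + 1) ω) * f (x n ω) + (α + l * ξ (n + 1) ω) * K
      else f (x n ω))
    (γ : ℝ) (hγ : γ ∈ Set.Ioo (0:ℝ) 1) :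
    (∃ Ωγ : Set Ω, MeasurableSet Ωγ ∧ P Ωγ > ENNReal.ofReal (1 - γ) ∧
      ∀ ω ∈ Ωγ, Tendsto (fun n => x n ω) atTop (nhds K)) ∧
    ((1 - α + l) * Lb * Lb ^ (k - 1) < 1 →
      ∀ ω, Tendsto (fun n => x n ω) atTop (nhds K)) := by
  have hkpos : 0 < k := hk
  have hLbpos : (0:ℝ) < Lb := lt_of_lt_of_le one_pos hLb
  set C : ℝ := |x₀ - K| with hC_def
  have hCnn : 0 ≤ C := abs_nonneg _
  -- step bounds
  have hfK' : ∀ y : ℝ, |f y - K| ≤ Lb * |y - K| := by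
    intro y
    have := hLip (y - K)
    rwa [sub_add_cancel] at this
  have hstep_pulse : ∀ n ω, k ∣ (n+1) →
      |x (n+1) ω - K| ≤ |1 - α - l * ξ (n+1) ω| * (Lb * |x n ω - K|) := by
    intro n ω hd
    have h := hrec n ω
    rw [if_pos hd] at h
    have h2 : x (n+1) ω - K = (1 - α - l * ξ (n+1) ω) * (f (x n ω) - K) := by
      rw [h]; ring
    rw [h2, abs_mul]
    exact mul_le_mul_of_nonneg_left (hfK' _) (abs_nonneg _)
  have hstep_np : ∀ n ω, ¬ k ∣ (n+1) →
      |x (n+1) ω - K| ≤ Lb * |x n ω - K| := by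
    intro n ω hd
    have h := hrec n ω
    rw [if_neg hd] at h
    rw [h]; exact hfK' _
  -- main pathwise bound
  have hbd : ∀ ω n, |x n ω - K| ≤
      C * (Lb ^ n * ∏ j ∈ range (n / k), |1 - α - l * ξ ((j+1)*k) ω|) := by
    intro ω n
    induction n with
    | zero => simp [hx0 ω, hC_def]
    | succ n ih =>
      have hprodnn : (0:ℝ) ≤ ∏ j ∈ range (n / k), |1 - α - l * ξ ((j+1)*k) ω| :=
        Finset.prod_nonneg fun j _ => abs_nonneg _
      by_cases hd : k ∣ (n+1)
      · have hq : (n+1)/k = n/k + 1 := Nat.succ_div_of_dvd hd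
        have hnk : (n/k + 1) * k = n + 1 := by
          have := Nat.div_mul_cancel hd
          rw [hq] at this; exact this
        calc |x (n+1) ω - K| ≤ |1 - α - l * ξ (n+1) ω| * (Lb * |x n ω - K|) :=
              hstep_pulse n ω hd
          _ ≤ |1 - α - l * ξ (n+1) ω| * (Lb *
              (C * (Lb ^ n * ∏ j ∈ range (n / k), |1 - α - l * ξ ((j+1)*k) ω|))) := by
              gcongr
          _ = C * (Lb ^ (n+1) * ((∏ j ∈ range (n / k), |1 - α - l * ξ ((j+1)*k) ω|) *
                |1 - α - l * ξ ((n/k + 1) * k) ω|)) := by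
              rw [hnk]; ring
          _ = C * (Lb ^ (n+1) * ∏ j ∈ range ((n+1) / k), |1 - α - l * ξ ((j+1)*k) ω|) := by
              rw [hq, Finset.prod_range_succ]
      · have hq : (n+1)/k = n/k := Nat.succ_div_of_not_dvd hd
        calc |x (n+1) ω - K| ≤ Lb * |x n ω - K| := hstep_np n ω hd
          _ ≤ Lb * (C * (Lb ^ n * ∏ j ∈ range (n / k), |1 - α - l * ξ ((j+1)*k) ω|)) := by
              gcongr
          _ = C * (Lb ^ (n+1) * ∏ j ∈ range ((n+1) / k), |1 - α - l * ξ ((j+1)*k) ω|) := by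
              rw [hq]; ring
  -- Lb ^ n ≤ Lb ^ k * Lb ^ (k * (n/k))
  have hLbn : ∀ n : ℕ, Lb ^ n ≤ Lb ^ k * Lb ^ (k * (n / k)) := by
    intro n
    rw [← pow_add]
    apply pow_le_pow_right₀ hLb
    have h1 := Nat.div_add_mod n k
    have h2 := Nat.mod_lt n hkpos
    omega
  -- division tendsto
  have hdivtop : Tendsto (fun n : ℕ => n / k) atTop atTop := by
    apply tendsto_atTop_atTop.2
    intro b
    exact ⟨b * k, fun n hn => (Nat.le_div_iff_mul_le hkpos).2 hn⟩
  -- squeeze lemma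
  have key : ∀ (ω : Ω) (u : ℕ → ℝ), (∀ n, |x n ω - K| ≤ u (n / k)) →
      Tendsto u atTop (nhds 0) → Tendsto (fun n => x n ω) atTop (nhds K) := by
    intro ω u hu hulim
    have h0 : Tendsto (fun n => |x n ω - K|) atTop (nhds 0) :=
      squeeze_zero (fun n => abs_nonneg _) hu (hulim.comp hdivtop)
    rw [tendsto_iff_dist_tendsto_zero]
    simpa [Real.dist_eq] using h0
  constructor
  · -- probabilistic part
    set g : ℝ → ℝ := fun t => Real.log |1 - α - l * t| with hg_def
    have hgmeas : Measurable g :=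
      Real.measurable_log.comp ((measurable_const.sub (measurable_id.const_mul l)).abs)
    set Y : ℕ → Ω → ℝ := fun j => g ∘ (ξ ((j+1)*k)) with hY_def
    have hYident : ∀ i, IdentDistrib (Y i) (Y 0) P P := by
      intro i
      exact ((hident ((i+1)*k)).comp hgmeas).trans ((hident ((0+1)*k)).comp hgmeas).symm
    have hYid0 : IdentDistrib (Y 0) (fun ω => Real.log |1 - α - l * ξ0 ω|) P P :=
      (hident ((0+1)*k)).comp hgmeas
    have hYint : Integrable (Y 0) P := (hYid0.integrable_iff).2 hint
    have hYindep : Pairwise (Function.onFun (IndepFun · · P) Y) := by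
      intro i j hij
      have hne : (i+1)*k ≠ (j+1)*k := by
        intro h
        have := Nat.eq_of_mul_eq_mul_right hkpos h
        omega
      exact (hindep.indepFun hne).comp hgmeas hgmeas
    have hslln := ProbabilityTheory.strong_law_ae (μ := P) Y hYint hYindep hYident
    set μval : ℝ := ∫ ω, Real.log |1 - α - l * ξ0 ω| ∂P with hμ_def
    have hμeq : (∫ ω, Y 0 ω ∂P) = μval := hYid0.integral_eq
    rw [hμeq] at hslln
    have hnull : P {ω | ¬ Tendsto (fun m : ℕ => (m:ℝ)⁻¹ • ∑ i ∈ range m, Y i ω)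
        atTop (nhds μval)} = 0 := by
      rw [← MeasureTheory.ae_iff]
      exact hslln
    refine ⟨(toMeasurable P {ω | ¬ Tendsto (fun m : ℕ => (m:ℝ)⁻¹ • ∑ i ∈ range m, Y i ω)
        atTop (nhds μval)})ᶜ, (measurableSet_toMeasurable _ _).compl, ?_, ?_⟩
    · rw [prob_compl_eq_one_sub (measurableSet_toMeasurable _ _), measure_toMeasurable, hnull]
      have h1 : ENNReal.ofReal (1 - γ) < 1 := ENNReal.ofReal_lt_one.2 (by linarith [hγ.1])
      simpa using h1
    · intro ω hω
      have hp : Tendsto (fun m : ℕ => (m:ℝ)⁻¹ • ∑ i ∈ range m, Y i ω) atTop (nhds μval) := by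
        by_contra h
        exact hω (subset_toMeasurable _ _ h)
      -- limit of the logarithmic bound
      have hneg : (k:ℝ) * Real.log Lb + μval < 0 := by linarith [hexp]
      have hSlim : Tendsto (fun m : ℕ => (k:ℝ) * Real.log Lb + (m:ℝ)⁻¹ * ∑ i ∈ range m, Y i ω)
          atTop (nhds ((k:ℝ) * Real.log Lb + μval)) := by
        apply tendsto_const_nhds.add
        simpa [smul_eq_mul] using hp
      have hT : Tendsto (fun m : ℕ =>
          ((k:ℝ) * Real.log Lb + (m:ℝ)⁻¹ * ∑ i ∈ range m, Y i ω) * (m:ℝ)) atTop atBot :=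
        Filter.Tendsto.neg_mul_atTop hneg hSlim tendsto_natCast_atTop_atTop
      have hTbot : Tendsto (fun m : ℕ =>
          (m:ℝ) * ((k:ℝ) * Real.log Lb) + ∑ i ∈ range m, Y i ω) atTop atBot := by
        apply hT.congr'
        filter_upwards [eventually_ge_atTop 1] with m hm
        have hm0 : (m:ℝ) ≠ 0 := Nat.cast_ne_zero.2 (by omega)
        field_simp
      have hexp0 : Tendsto (fun m : ℕ =>
          Real.exp ((m:ℝ) * ((k:ℝ) * Real.log Lb) + ∑ i ∈ range m, Y i ω))
          atTop (nhds 0) := Real.tendsto_exp_atBot.comp hTbot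
      apply key ω (fun m => C * Lb ^ k *
        Real.exp ((m:ℝ) * ((k:ℝ) * Real.log Lb) + ∑ i ∈ range m, Y i ω))
      · intro n
        have hprod : (∏ j ∈ range (n/k), |1 - α - l * ξ ((j+1)*k) ω|) ≤
            Real.exp (∑ i ∈ range (n/k), Y i ω) := by
          rw [Real.exp_sum]
          refine Finset.prod_le_prod (fun j _ => abs_nonneg _) (fun j _ => ?_)
          exact Real.le_exp_log _
        have hLbexp : Lb ^ (k * (n/k)) =
            Real.exp (((n/k : ℕ):ℝ) * ((k:ℝ) * Real.log Lb)) := by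
          rw [show ((n/k : ℕ):ℝ) * ((k:ℝ) * Real.log Lb)
              = ((k * (n/k) : ℕ):ℝ) * Real.log Lb by push_cast; ring,
            Real.exp_nat_mul, Real.exp_log hLbpos]
        calc |x n ω - K| ≤
            C * (Lb ^ n * ∏ j ∈ range (n / k), |1 - α - l * ξ ((j+1)*k) ω|) := hbd ω n
          _ ≤ C * ((Lb ^ k * Lb ^ (k * (n/k))) *
              ∏ j ∈ range (n / k), |1 - α - l * ξ ((j+1)*k) ω|) := by
              refine mul_le_mul_of_nonneg_left
                (mul_le_mul_of_nonneg_right (hLbn n) ?_) hCnn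
              exact Finset.prod_nonneg fun j _ => abs_nonneg _
          _ = C * Lb ^ k * (Lb ^ (k * (n/k)) *
              ∏ j ∈ range (n / k), |1 - α - l * ξ ((j+1)*k) ω|) := by ring
          _ ≤ C * Lb ^ k * (Lb ^ (k * (n/k)) * Real.exp (∑ i ∈ range (n/k), Y i ω)) := by
              refine mul_le_mul_of_nonneg_left
                (mul_le_mul_of_nonneg_left hprod (by positivity)) (by positivity)
          _ = C * Lb ^ k * Real.exp (((n/k : ℕ):ℝ) * ((k:ℝ) * Real.log Lb)
              + ∑ i ∈ range (n/k), Y i ω) := by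
              rw [hLbexp, ← Real.exp_add]
      · simpa using hexp0.const_mul (C * Lb ^ k)
  · -- deterministic part
    intro hcontr ω
    have hρeq : Lb ^ k = Lb ^ (k-1) * Lb := by
      rw [← pow_succ]
      congr 1
      omega
    set ρ : ℝ := (1 - α + l) * Lb ^ k with hρ_def
    have hρnn : 0 ≤ ρ := by
      have : (0:ℝ) ≤ 1 - α + l := by have := hα.2; linarith
      positivity
    have hρlt : ρ < 1 := by
      rw [hρ_def, hρeq]
      calc (1 - α + l) * (Lb ^ (k-1) * Lb) = (1 - α + l) * Lb * Lb ^ (k-1) := by ring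
        _ < 1 := hcontr
    apply key ω (fun m => C * Lb ^ k * ρ ^ m)
    · intro n
      have hfac : ∀ m : ℕ, |1 - α - l * ξ m ω| ≤ 1 - α + l := by
        intro m
        have h1 := (abs_le.1 (hbound m ω)).1
        have h2 := (abs_le.1 (hbound m ω)).2
        rw [abs_le]
        constructor <;> nlinarith [hα.2, hl]
      calc |x n ω - K| ≤
          C * (Lb ^ n * ∏ j ∈ range (n / k), |1 - α - l * ξ ((j+1)*k) ω|) := hbd ω n
        _ ≤ C * ((Lb ^ k * Lb ^ (k * (n/k))) * ∏ j ∈ range (n / k), (1 - α + l)) := by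
            refine mul_le_mul_of_nonneg_left ?_ hCnn
            refine mul_le_mul (hLbn n) ?_
              (Finset.prod_nonneg fun j _ => abs_nonneg _) (by positivity)
            exact Finset.prod_le_prod (fun j _ => abs_nonneg _) (fun j _ => hfac _)
        _ = C * Lb ^ k * ρ ^ (n / k) := by
            rw [Finset.prod_const, Finset.card_range, hρ_def, mul_pow, ← pow_mul,
              mul_comm k (n/k)]
            ring
    · have := tendsto_pow_atTop_nhds_zero_of_lt_one hρnn hρlt
      have h2 := this.const_mul (C * Lb ^ k)
      simpa using h2
end

section
/- Consider the pulsed stochastic TOC equation along the d-cycle with pulse period md, and assume the global Lipschitz conditions |f(x) − K_{i+1}| ≤ L̄_i·|x − K_i| for all x ∈ ℝ and i = 1,…,d, with L̄(d) := ∏_{i=1}^d max{1, L̄_i}. If ln|1−α−l·ξ| is integrable and −E[ln|1 − α − l·ξ|] > m·ln L̄(d), then for every initial value x₀ > 0 and every γ ∈ (0,1) there exists Ω_γ ⊆ Ω with P(Ω_γ) > 1−γ such that for every j̄ ∈ {0,1,…,d−1}, lim_{n→∞} x_{nd+j̄}(ω) = K_{j̄+1} for all ω ∈ Ω_γ (with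 K_{d+1} := K₁). -/
open MeasureTheory ProbabilityTheory Filter

set_option maxHeartbeats 1000000

section AuxSTMT10
open Finset

lemma aux_prod_zmod (d : ℕ) [NeZero d] (g : ZMod d → ℝ) :
    ∏ r ∈ Finset.range d, g (r : ZMod d) = ∏ i : ZMod d, g i := by
  refine Finset.prod_nbij (fun r => (r : ZMod d)) (fun a _ => Finset.mem_univ _) ?_ ?_ (fun a _ => rfl)
  · intro a ha b hb hab
    simp only [Finset.mem_coe, Finset.mem_range] at ha hb
    have := congrArg ZMod.val hab
    rwa [ZMod.val_cast_of_lt ha, ZMod.val_cast_of_lt hb] at this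
  · intro i _
    exact ⟨i.val, Finset.mem_coe.2 (Finset.mem_range.2 (ZMod.val_lt i)), ZMod.natCast_zmod_val i⟩

lemma aux_prod_zmod_mul (d : ℕ) [NeZero d] (g : ZMod d → ℝ) (m : ℕ) :
    ∏ r ∈ Finset.range (m * d), g (r : ZMod d) = (∏ i : ZMod d, g i) ^ m := by
  induction m with
  | zero => simp
  | succ m ih =>
    rw [Nat.succ_mul, Finset.prod_range_add, ih, pow_succ]
    congr 1
    rw [← aux_prod_zmod d g]
    refine Finset.prod_congr rfl fun r _ => ?_
    congr 1
    push_cast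
    simp [ZMod.natCast_self]

lemma aux_prod_le_exp (v : ℕ → ℝ) (hv : ∀ k, 0 ≤ v k) (s : ℕ) :
    ∏ k ∈ Finset.range s, v k ≤ Real.exp (∑ k ∈ Finset.range s, Real.log (v k)) := by
  induction s with
  | zero => simp
  | succ s ih =>
    rw [Finset.prod_range_succ, Finset.sum_range_succ, Real.exp_add]
    have h1 : v s ≤ Real.exp (Real.log (v s)) := by
      rcases eq_or_lt_of_le (hv s) with h | h
      · rw [← h]; exact (Real.exp_pos _).le
      · rw [Real.exp_log h]
    calc (∏ k ∈ Finset.range s, v k) * v s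
        ≤ Real.exp (∑ k ∈ Finset.range s, Real.log (v k)) * v s :=
          mul_le_mul_of_nonneg_right ih (hv s)
      _ ≤ Real.exp (∑ k ∈ Finset.range s, Real.log (v k)) * Real.exp (Real.log (v s)) :=
          mul_le_mul_of_nonneg_left h1 (Real.exp_pos _).le

lemma aux_det (d : ℕ) [NeZero d]
    (f : ℝ → ℝ)
    (K : ZMod d → ℝ)
    (Lb : ZMod d → ℝ) (hLb : ∀ i, 0 < Lb i)
    (hLip : ∀ i : ZMod d, ∀ x : ℝ, |f x - K (i + 1)| ≤ Lb i * |x - K i|)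
    (Lbd : ℝ) (hLbd : Lbd = ∏ i : ZMod d, max 1 (Lb i))
    (m : ℕ) (hm : 1 ≤ m)
    (α l : ℝ) (u : ℕ → ℝ) (y : ℕ → ℝ)
    (hrec : ∀ n, y (n + 1) =
      if (m * d) ∣ (n + 1) then
        (1 - α - l * u (n + 1)) * f (y n) + (α + l * u (n + 1)) * K 1
      else f (y n))
    (hS : Tendsto (fun s : ℕ => Real.exp ((m : ℝ) * s * Real.log Lbd +
        ∑ k ∈ Finset.range s, Real.log |1 - α - l * u ((k + 1) * (m * d))|)) atTop (nhds 0)) :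
    ∀ jb : ℕ, jb < d → Tendsto (fun n => y (n * d + jb)) atTop (nhds (K ((jb : ZMod d) + 1))) := by
  have hd : 0 < d := Nat.pos_of_ne_zero (NeZero.ne d)
  have hN : 0 < m * d := Nat.mul_pos hm hd
  have hLbd1 : 1 ≤ Lbd := by
    rw [hLbd]
    calc (1 : ℝ) = ∏ _i : ZMod d, 1 := by simp
      _ ≤ ∏ i : ZMod d, max 1 (Lb i) :=
        Finset.prod_le_prod (fun i _ => zero_le_one) (fun i _ => le_max_left _ _)
  have hLbd0 : 0 < Lbd := lt_of_lt_of_le one_pos hLbd1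
  set E : ℕ → ℝ := fun n => |y n - K ((n : ZMod d) + 1)| with hE
  have hEnn : ∀ n, 0 ≤ E n := fun n => abs_nonneg _
  -- one-step bound
  have step : ∀ n, E (n + 1) ≤
      (Lb ((n : ZMod d) + 1) * (if m * d ∣ (n + 1) then |1 - α - l * u (n + 1)| else 1)) * E n := by
    intro n
    have hcast : ((n + 1 : ℕ) : ZMod d) = (n : ZMod d) + 1 := by push_cast; ring
    simp only [hE]
    rw [hrec n]
    split_ifs with h
    · have hz : ((n + 1 : ℕ) : ZMod d) = 0 := by
        rw [ZMod.natCast_eq_zero_iff]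
        exact dvd_trans (dvd_mul_left d m) h
      have key : (1 - α - l * u (n + 1)) * f (y n) + (α + l * u (n + 1)) * K 1 - K 1
          = (1 - α - l * u (n + 1)) * (f (y n) - K 1) := by ring
      rw [hz, zero_add, key, abs_mul]
      have hK1 : K ((n : ZMod d) + 1 + 1) = K 1 := by rw [← hcast, hz, zero_add]
      calc |1 - α - l * u (n + 1)| * |f (y n) - K 1|
          ≤ |1 - α - l * u (n + 1)| * (Lb ((n : ZMod d) + 1) * |y n - K ((n : ZMod d) + 1)|) := by
            apply mul_le_mul_of_nonneg_left _ (abs_nonneg _)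
            have := hLip ((n : ZMod d) + 1) (y n)
            rwa [hK1] at this
        _ = (Lb ((n : ZMod d) + 1) * |1 - α - l * u (n + 1)|) * |y n - K ((n : ZMod d) + 1)| := by
            ring
    · calc |f (y n) - K (((n + 1 : ℕ) : ZMod d) + 1)|
          = |f (y n) - K (((n : ZMod d) + 1) + 1)| := by rw [hcast]
        _ ≤ Lb ((n : ZMod d) + 1) * |y n - K ((n : ZMod d) + 1)| := hLip _ _
        _ = (Lb ((n : ZMod d) + 1) * 1) * |y n - K ((n : ZMod d) + 1)| := by ring
  -- within-period bound
  have claim1 : ∀ s r, r < m * d →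
      E (s * (m * d) + r) ≤ (∏ j ∈ Finset.range r, Lb ((j : ZMod d) + 1)) * E (s * (m * d)) := by
    intro s r
    induction r with
    | zero => intro _; simp
    | succ r ih =>
      intro hr
      have hr' : r < m * d := Nat.lt_of_succ_lt hr
      have hnotdvd : ¬ (m * d ∣ s * (m * d) + r + 1) := by
        intro hdvd
        have h2 : m * d ∣ r + 1 := by
          have h3 : m * d ∣ s * (m * d) + (r + 1) := by
            rwa [← add_assoc]
          have := Nat.dvd_sub h3 (dvd_mul_left (m * d) s)
          simpa using this
        have := Nat.le_of_dvd (Nat.succ_pos r) h2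
        omega
      have hstep := step (s * (m * d) + r)
      rw [if_neg hnotdvd] at hstep
      have hcast : ((s * (m * d) + r : ℕ) : ZMod d) = (r : ZMod d) := by
        push_cast
        simp [ZMod.natCast_self]
      rw [hcast, mul_one] at hstep
      calc E (s * (m * d) + (r + 1)) = E ((s * (m * d) + r) + 1) := by rw [add_assoc]
        _ ≤ Lb ((r : ZMod d) + 1) * E (s * (m * d) + r) := hstep
        _ ≤ Lb ((r : ZMod d) + 1) *
            ((∏ j ∈ Finset.range r, Lb ((j : ZMod d) + 1)) * E (s * (m * d))) :=
            mul_le_mul_of_nonneg_left (ih hr') (hLb _).le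
        _ = (∏ j ∈ Finset.range (r + 1), Lb ((j : ZMod d) + 1)) * E (s * (m * d)) := by
            rw [Finset.prod_range_succ]; ring
  -- product over a full pulse period
  have hLbdEq : (∏ i : ZMod d, max 1 (Lb (i + 1))) = Lbd := by
    rw [hLbd]
    exact Fintype.prod_equiv (Equiv.addRight (1 : ZMod d)) _ _ (fun i => rfl)
  have hprodr : ∀ r, r ≤ m * d →
      (∏ j ∈ Finset.range r, Lb ((j : ZMod d) + 1)) ≤ Lbd ^ m := by
    intro r hr
    calc (∏ j ∈ Finset.range r, Lb ((j : ZMod d) + 1))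
        ≤ ∏ j ∈ Finset.range r, max 1 (Lb ((j : ZMod d) + 1)) :=
          Finset.prod_le_prod (fun _ _ => (hLb _).le) (fun _ _ => le_max_right _ _)
      _ ≤ ∏ j ∈ Finset.range (m * d), max 1 (Lb ((j : ZMod d) + 1)) := by
          rw [← Finset.prod_range_mul_prod_Ico _ hr]
          apply le_mul_of_one_le_right
          · exact Finset.prod_nonneg fun _ _ => le_trans zero_le_one (le_max_left _ _)
          · calc (1 : ℝ) = ∏ _j ∈ Finset.Ico r (m * d), 1 := by simp
              _ ≤ ∏ j ∈ Finset.Ico r (m * d), max 1 (Lb ((j : ZMod d) + 1)) :=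
                Finset.prod_le_prod (fun _ _ => zero_le_one) (fun _ _ => le_max_left _ _)
      _ = (∏ i : ZMod d, max 1 (Lb (i + 1))) ^ m :=
          aux_prod_zmod_mul d (fun i => max 1 (Lb (i + 1))) m
      _ = Lbd ^ m := by rw [hLbdEq]
  have hprodm : (∏ j ∈ Finset.range (m * d), Lb ((j : ZMod d) + 1)) ≤ Lbd ^ m :=
    hprodr _ le_rfl
  -- one full period
  have claim2 : ∀ s, E ((s + 1) * (m * d)) ≤
      (Lbd ^ m * |1 - α - l * u ((s + 1) * (m * d))|) * E (s * (m * d)) := by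
    intro s
    have hsucc : m * d - 1 + 1 = m * d := Nat.succ_pred_eq_of_pos hN
    have hn1 : s * (m * d) + (m * d - 1) + 1 = (s + 1) * (m * d) := by
      rw [add_assoc, hsucc, Nat.succ_mul]
    have hstep := step (s * (m * d) + (m * d - 1))
    rw [hn1, if_pos (dvd_mul_left (m * d) (s + 1))] at hstep
    have hcastn : ((s * (m * d) + (m * d - 1) : ℕ) : ZMod d) = ((m * d - 1 : ℕ) : ZMod d) := by
      push_cast
      simp [ZMod.natCast_self]
    rw [hcastn] at hstep
    have h1 := claim1 s (m * d - 1) (by omega)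
    have hb : (0 : ℝ) ≤ Lb (((m * d - 1 : ℕ) : ZMod d) + 1) * |1 - α - l * u ((s + 1) * (m * d))| :=
      mul_nonneg (hLb _).le (abs_nonneg _)
    calc E ((s + 1) * (m * d))
        ≤ (Lb (((m * d - 1 : ℕ) : ZMod d) + 1) * |1 - α - l * u ((s + 1) * (m * d))|) *
            E (s * (m * d) + (m * d - 1)) := hstep
      _ ≤ (Lb (((m * d - 1 : ℕ) : ZMod d) + 1) * |1 - α - l * u ((s + 1) * (m * d))|) *
            ((∏ j ∈ Finset.range (m * d - 1), Lb ((j : ZMod d) + 1)) * E (s * (m * d))) :=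
          mul_le_mul_of_nonneg_left h1 hb
      _ = ((∏ j ∈ Finset.range (m * d), Lb ((j : ZMod d) + 1)) *
            |1 - α - l * u ((s + 1) * (m * d))|) * E (s * (m * d)) := by
          have hps : (∏ j ∈ Finset.range (m * d), Lb ((j : ZMod d) + 1))
              = (∏ j ∈ Finset.range (m * d - 1), Lb ((j : ZMod d) + 1)) *
                Lb (((m * d - 1 : ℕ) : ZMod d) + 1) := by
            rw [← Finset.prod_range_succ, hsucc]
          rw [hps]; ring
      _ ≤ (Lbd ^ m * |1 - α - l * u ((s + 1) * (m * d))|) * E (s * (m * d)) := by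
          apply mul_le_mul_of_nonneg_right _ (hEnn _)
          exact mul_le_mul_of_nonneg_right hprodm (abs_nonneg _)
  -- iterate over periods
  have claim3 : ∀ s, E (s * (m * d)) ≤
      E 0 * ((Lbd ^ m) ^ s * ∏ k ∈ Finset.range s, |1 - α - l * u ((k + 1) * (m * d))|) := by
    intro s
    induction s with
    | zero => simp
    | succ s ih =>
      have hbnn : (0 : ℝ) ≤ Lbd ^ m * |1 - α - l * u ((s + 1) * (m * d))| :=
        mul_nonneg (pow_nonneg hLbd0.le m) (abs_nonneg _)
      calc E ((s + 1) * (m * d))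
          ≤ (Lbd ^ m * |1 - α - l * u ((s + 1) * (m * d))|) * E (s * (m * d)) := claim2 s
        _ ≤ (Lbd ^ m * |1 - α - l * u ((s + 1) * (m * d))|) *
              (E 0 * ((Lbd ^ m) ^ s * ∏ k ∈ Finset.range s, |1 - α - l * u ((k + 1) * (m * d))|)) :=
            mul_le_mul_of_nonneg_left ih hbnn
        _ = E 0 * ((Lbd ^ m) ^ (s + 1) * ∏ k ∈ Finset.range (s + 1),
              |1 - α - l * u ((k + 1) * (m * d))|) := by
            rw [pow_succ, Finset.prod_range_succ]; ring
  -- exponential bound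
  have hE0 : 0 ≤ E 0 := hEnn 0
  have expbound : ∀ s : ℕ, E (s * (m * d)) ≤
      E 0 * Real.exp ((m : ℝ) * s * Real.log Lbd +
        ∑ k ∈ Finset.range s, Real.log |1 - α - l * u ((k + 1) * (m * d))|) := by
    intro s
    have hpow : (Lbd ^ m) ^ s = Real.exp ((m : ℝ) * s * Real.log Lbd) := by
      rw [← pow_mul, ← Real.exp_log hLbd0, ← Real.exp_nat_mul]
      congr 1
      rw [Real.exp_log hLbd0]
      push_cast
      ring
    have hple := aux_prod_le_exp (fun k => |1 - α - l * u ((k + 1) * (m * d))|)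
      (fun k => abs_nonneg _) s
    calc E (s * (m * d))
        ≤ E 0 * ((Lbd ^ m) ^ s * ∏ k ∈ Finset.range s, |1 - α - l * u ((k + 1) * (m * d))|) :=
          claim3 s
      _ ≤ E 0 * ((Lbd ^ m) ^ s *
            Real.exp (∑ k ∈ Finset.range s, Real.log |1 - α - l * u ((k + 1) * (m * d))|)) := by
          apply mul_le_mul_of_nonneg_left _ hE0
          exact mul_le_mul_of_nonneg_left hple (pow_nonneg (pow_nonneg hLbd0.le m) s)
      _ = E 0 * Real.exp ((m : ℝ) * s * Real.log Lbd +
            ∑ k ∈ Finset.range s, Real.log |1 - α - l * u ((k + 1) * (m * d))|) := by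
          rw [hpow, ← Real.exp_add]
  -- convergence along the pulse subsequence
  have tend0 : Tendsto (fun s => E (s * (m * d))) atTop (nhds 0) := by
    have h2 : Tendsto (fun s : ℕ => E 0 * Real.exp ((m : ℝ) * s * Real.log Lbd +
        ∑ k ∈ Finset.range s, Real.log |1 - α - l * u ((k + 1) * (m * d))|)) atTop (nhds 0) := by
      have := hS.const_mul (E 0)
      rwa [mul_zero] at this
    exact squeeze_zero (fun s => hEnn _) (fun s => expbound s) h2
  -- convergence of the full error sequence
  have hC : ∀ n, E n ≤ Lbd ^ m * E (n / (m * d) * (m * d)) := by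
    intro n
    have hdecomp : n / (m * d) * (m * d) + n % (m * d) = n := by
      rw [mul_comm]; exact Nat.div_add_mod n (m * d)
    have hr : n % (m * d) < m * d := Nat.mod_lt _ hN
    calc E n = E (n / (m * d) * (m * d) + n % (m * d)) := by rw [hdecomp]
      _ ≤ (∏ j ∈ Finset.range (n % (m * d)), Lb ((j : ZMod d) + 1)) *
            E (n / (m * d) * (m * d)) := claim1 _ _ hr
      _ ≤ Lbd ^ m * E (n / (m * d) * (m * d)) :=
          mul_le_mul_of_nonneg_right (hprodr _ hr.le) (hEnn _)
  have hdivtop : Tendsto (fun n : ℕ => n / (m * d)) atTop atTop := by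
    apply Filter.tendsto_atTop_atTop.2
    intro b
    exact ⟨b * (m * d), fun a ha => (Nat.le_div_iff_mul_le hN).2 ha⟩
  have tendE : Tendsto E atTop (nhds 0) := by
    have h2 : Tendsto (fun n : ℕ => E (n / (m * d) * (m * d))) atTop (nhds 0) :=
      tend0.comp hdivtop
    have h3 : Tendsto (fun n : ℕ => Lbd ^ m * E (n / (m * d) * (m * d))) atTop (nhds 0) := by
      have := h2.const_mul (Lbd ^ m)
      rwa [mul_zero] at this
    exact squeeze_zero hEnn hC h3
  -- conclusion
  intro jb hjb
  have hcst : ∀ n : ℕ, ((n * d + jb : ℕ) : ZMod d) = (jb : ZMod d) := by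
    intro n
    push_cast
    simp [ZMod.natCast_self]
  rw [tendsto_iff_norm_sub_tendsto_zero]
  have htop : Tendsto (fun n : ℕ => n * d + jb) atTop atTop := by
    apply tendsto_atTop_mono (f := fun n : ℕ => n)
    · intro n
      calc n = n * 1 := (mul_one n).symm
        _ ≤ n * d := Nat.mul_le_mul_left n hd
        _ ≤ n * d + jb := Nat.le_add_right _ _
    · exact tendsto_id
  have := tendE.comp htop
  refine this.congr fun n => ?_
  simp only [Function.comp_apply, hE, Real.norm_eq_abs, hcst n]

end AuxSTMT10

/-- Theorem 4 (global version, `d`-cycle): under global Lipschitz conditions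
`|f(x) − K_{i+1}| ≤ L̄_i|x − K_i|` for all `x ∈ ℝ`, with `L̄(d) = ∏ max{1, L̄_i}`, and
`-E[ln|1−α−lξ|] > m ln L̄(d)`, pulsed stochastic TOC along the cycle globally stabilizes
the `d`-cycle with any prescribed probability `1−γ`. -/
theorem stmt_10
    {Ω : Type*} [MeasurableSpace Ω] (P : Measure Ω) [IsProbabilityMeasure P]
    (ξ : ℕ → Ω → ℝ) (ξ0 : Ω → ℝ)
    (hξmeas : ∀ n, Measurable (ξ n)) (hξ0meas : Measurable ξ0)
    (hindep : iIndepFun ξ P)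
    (hident : ∀ n, IdentDistrib (ξ n) ξ0 P P)
    (hbound : ∀ n ω, |ξ n ω| ≤ 1) (hbound0 : ∀ ω, |ξ0 ω| ≤ 1)
    (d : ℕ) [NeZero d]
    (f : ℝ → ℝ) (hfcont : Continuous f) (hfpos : ∀ x, 0 ≤ f x)
    (K : ZMod d → ℝ) (hK : ∀ i, f (K i) = K (i + 1))
    (Lb : ZMod d → ℝ) (hLb : ∀ i, 0 < Lb i)
    (hLip : ∀ i : ZMod d, ∀ x : ℝ, |f x - K (i + 1)| ≤ Lb i * |x - K i|)
    (Lbd : ℝ) (hLbd : Lbd = ∏ i : ZMod d, max 1 (Lb i))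
    (m : ℕ) (hm : 1 ≤ m)
    (α : ℝ) (hα : α ∈ Set.Ico (0:ℝ) 1) (l : ℝ) (hl : 0 ≤ l)
    (x₀ : ℝ) (hx₀ : 0 < x₀)
    (x : ℕ → Ω → ℝ) (hx0 : ∀ ω, x 0 ω = x₀)
    (hrec : ∀ n ω, x (n + 1) ω =
      if (m * d) ∣ (n + 1) then
        (1 - α - l * ξ (n + 1) ω) * f (x n ω) + (α + l * ξ (n + 1) ω) * K 1
      else f (x n ω))
    (hint : Integrable (fun ω => Real.log |1 - α - l * ξ0 ω|) P)
    (hexp : -∫ ω, Real.log |1 - α - l * ξ0 ω| ∂P > (m : ℝ) * Real.log Lbd)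
    (γ : ℝ) (hγ : γ ∈ Set.Ioo (0:ℝ) 1) :
    ∃ Ωγ : Set Ω, MeasurableSet Ωγ ∧ P Ωγ > ENNReal.ofReal (1 - γ) ∧
      ∀ jb : ℕ, jb < d → ∀ ω ∈ Ωγ,
        Tendsto (fun n => x (n * d + jb) ω) atTop (nhds (K ((jb : ZMod d) + 1))) := by

  obtain ⟨hγ0, hγ1⟩ := hγ
  have hd : 0 < d := Nat.pos_of_ne_zero (NeZero.ne d)
  have hN : 0 < m * d := Nat.mul_pos hm hd
  set g : ℝ → ℝ := fun v => Real.log |1 - α - l * v| with hg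
  have hgmeas : Measurable g := by
    apply Real.measurable_log.comp
    exact (measurable_const.sub (measurable_id.const_mul l)).abs
  set X : ℕ → Ω → ℝ := fun k ω => g (ξ ((k + 1) * (m * d)) ω) with hX
  have hXident0 : ∀ k, IdentDistrib (X k) (fun ω => g (ξ0 ω)) P P :=
    fun k => (hident _).comp hgmeas
  have hidentX : ∀ k, IdentDistrib (X k) (X 0) P P :=
    fun k => (hXident0 k).trans (hXident0 0).symm
  have hintX : Integrable (X 0) P := ((hXident0 0).integrable_iff).2 hint
  have hindepX : Pairwise (Function.onFun (IndepFun · · P) X) := by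
    intro i j hij
    have hne : (i + 1) * (m * d) ≠ (j + 1) * (m * d) := by
      intro h
      have := Nat.eq_of_mul_eq_mul_right hN h
      omega
    exact (hindep.indepFun hne).comp hgmeas hgmeas
  have hae := strong_law_ae_real X hintX hindepX hidentX
  have hμ : (∫ ω, X 0 ω ∂P) = ∫ ω, Real.log |1 - α - l * ξ0 ω| ∂P :=
    (hXident0 0).integral_eq
  have hδ : (m : ℝ) * Real.log Lbd + ∫ ω, Real.log |1 - α - l * ξ0 ω| ∂P < 0 := by
    linarith [hexp]
  have hae' : ∀ᵐ ω ∂P, Tendsto (fun s : ℕ => Real.exp ((m : ℝ) * s * Real.log Lbd +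
      ∑ k ∈ Finset.range s, Real.log |1 - α - l * ξ ((k + 1) * (m * d)) ω|))
      atTop (nhds 0) := by
    filter_upwards [hae] with ω hω
    have hg1 : Tendsto (fun s : ℕ => (m : ℝ) * Real.log Lbd + (∑ i ∈ Finset.range s, X i ω) / s)
        atTop (nhds ((m : ℝ) * Real.log Lbd + ∫ ω, Real.log |1 - α - l * ξ0 ω| ∂P)) := by
      apply tendsto_const_nhds.add
      rw [← hμ]
      exact hω
    have h1 : Tendsto (fun s : ℕ => (s : ℝ) *
        ((m : ℝ) * Real.log Lbd + (∑ i ∈ Finset.range s, X i ω) / s)) atTop atBot :=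
      Tendsto.atTop_mul_neg hδ tendsto_natCast_atTop_atTop hg1
    have h2 : Tendsto (fun s : ℕ => (m : ℝ) * s * Real.log Lbd +
        ∑ i ∈ Finset.range s, X i ω) atTop atBot := by
      apply h1.congr'
      filter_upwards [eventually_ge_atTop 1] with s hs
      have hs0 : (s : ℝ) ≠ 0 := Nat.cast_ne_zero.2 (by omega)
      field_simp
    exact Real.tendsto_exp_atBot.comp h2
  obtain ⟨t, hsub, htm, ht0⟩ := exists_measurable_superset_of_null (ae_iff.mp hae')
  refine ⟨tᶜ, htm.compl, ?_, ?_⟩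
  · rw [measure_compl htm (measure_ne_top P t), ht0, measure_univ, tsub_zero]
    exact ENNReal.ofReal_lt_one.2 (by linarith)
  · intro jb hjb ω hω
    have hωgood : Tendsto (fun s : ℕ => Real.exp ((m : ℝ) * s * Real.log Lbd +
        ∑ k ∈ Finset.range s, Real.log |1 - α - l * ξ ((k + 1) * (m * d)) ω|))
        atTop (nhds 0) := by
      by_contra h
      exact hω (hsub h)
    exact aux_det d f K Lb hLb hLip Lbd hLbd m hm α l (fun n => ξ n ω) (fun n => x n ω)
      (fun n => hrec n ω) hωgood jb hjb
end

section
/- Consider the pulsed stochastic PBC sequence. Assume f admits the expansion f(x) = K + 𝒜·(x−K) + φ(x) with |φ(x)| ≤ ψ(|x−K|)·|x−K| for all |x−K| ≤ u₀, where ψ(u) → 0 as u → 0⁺ and |𝒜| ≥ 1. Assume ln|(1−α)·𝒜 + α + (1−𝒜)·l·ξ| is integrable and −E[ln|(1−α)·𝒜 + α + (1−𝒜)·l·ξ|] > (k−1)·ln|𝒜|. Then for every γ ∈ (0,1) there exist δ₀ > 0 and a measurable set Ω_γ ⊆ Ω with P(Ω_γ) > 1−γ such that every solution (x_n) with |x₀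 − K| ≤ δ₀ satisfies lim_{n→∞} x_n(ω) = K for every ω ∈ Ω_γ. -/
open MeasureTheory ProbabilityTheory Filter

lemma aux_log_add_le {x ε : ℝ} (hx : 0 < x) (hε : 0 ≤ ε) :
    Real.log (x + ε) ≤ Real.log x + ε / x := by
  have h1 : Real.log (x + ε) - Real.log x = Real.log ((x + ε) / x) := by
    rw [Real.log_div (by linarith) (ne_of_gt hx)]
  have h2 : Real.log ((x + ε) / x) ≤ (x + ε) / x - 1 :=
    Real.log_le_sub_one_of_pos (by positivity)
  have h3 : (x + ε) / x - 1 = ε / x := by field_simp; ring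
  linarith

lemma aux_nat_dvd {k n : ℕ} (hk : 1 ≤ k) (h : k ∣ (n + 1)) :
    n % k = k - 1 ∧ (n + 1) % k = 0 ∧ (n + 1) / k = n / k + 1 := by
  obtain ⟨t, ht⟩ := h
  have hdm : k * (n / k) + n % k = n := Nat.div_add_mod n k
  have hlt : n % k < k := Nat.mod_lt _ hk
  have hle : n / k ≤ t := by
    by_contra hc
    push_neg at hc
    have h2 : k * (t + 1) ≤ k * (n / k) := Nat.mul_le_mul_left k hc
    have h3 : k * (t + 1) = k * t + k := by ring
    omega
  have hkt : k * (t - n / k) + k * (n / k) = k * t := by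
    rw [← Nat.mul_add, Nat.sub_add_cancel hle]
  have hr1 : n % k + 1 = k * (t - n / k) := by omega
  have hta : t - n / k ≠ 0 := by intro h0; rw [h0, Nat.mul_zero] at hr1; omega
  have hk2 : k ≤ k * (t - n / k) := Nat.le_mul_of_pos_right k (by omega)
  have hmod : n % k = k - 1 := by omega
  have ht1 : t = n / k + 1 := by
    have hrk : n % k + 1 = k := by omega
    rw [hrk] at hr1
    have h4 : k * 1 = k * (t - n / k) := by omega
    have := Nat.eq_of_mul_eq_mul_left (show 0 < k by omega) h4
    omega
  refine ⟨hmod, ?_, ?_⟩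
  · rw [ht, Nat.mul_mod_right]
  · rw [ht, ht1, Nat.mul_div_cancel_left _ (show 0 < k by omega)]

lemma aux_nat_ndvd {k n : ℕ} (hk : 1 ≤ k) (h : ¬ k ∣ (n + 1)) :
    (n + 1) % k = n % k + 1 ∧ (n + 1) / k = n / k := by
  have hdm : k * (n / k) + n % k = n := Nat.div_add_mod n k
  have hlt : n % k < k := Nat.mod_lt _ hk
  have hne : n % k + 1 ≠ k := by
    intro hEq
    exact h ⟨n / k + 1, by rw [Nat.mul_add, Nat.mul_one]; omega⟩
  have hlt' : n % k + 1 < k := by omega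
  have h1 : n + 1 = k * (n / k) + (n % k + 1) := by omega
  constructor
  · rw [h1, Nat.mul_add_mod, Nat.mod_eq_of_lt hlt']
  · rw [h1, Nat.mul_add_div (by omega), Nat.div_eq_of_lt hlt', Nat.add_zero]

set_option maxHeartbeats 2000000 in
/-- Theorem 5: local stabilization of a point equilibrium `K` by pulsed stochastic
Prediction-Based Control, when `f(x) = K + 𝒜(x−K) + φ(x)` near `K` with
`|φ(x)| ≤ ψ(|x−K|)|x−K|`, `ψ(u) → 0` as `u → 0⁺`, `|𝒜| ≥ 1`, under
`-E[ln|(1−α)𝒜 + α + (1−𝒜)lξ|] > (k−1) ln|𝒜|`. -/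
theorem stmt_11
    {Ω : Type*} [MeasurableSpace Ω] (P : Measure Ω) [IsProbabilityMeasure P]
    (ξ : ℕ → Ω → ℝ) (ξ0 : Ω → ℝ)
    (hξmeas : ∀ n, Measurable (ξ n)) (hξ0meas : Measurable ξ0)
    (hindep : iIndepFun ξ P)
    (hident : ∀ n, IdentDistrib (ξ n) ξ0 P P)
    (hbound : ∀ n ω, |ξ n ω| ≤ 1) (hbound0 : ∀ ω, |ξ0 ω| ≤ 1)
    (f : ℝ → ℝ) (hfpos : ∀ x, 0 ≤ f x)
    (K : ℝ) (hKpos : 0 < K) (hfK : f K = K)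
    (k : ℕ) (hk : 1 ≤ k)
    (α : ℝ) (hα : α ∈ Set.Ico (0:ℝ) 1) (l : ℝ) (hl : 0 ≤ l)
    (u₀ : ℝ) (hu₀ : 0 < u₀)
    (A : ℝ) (hA : 1 ≤ |A|)
    (φ : ℝ → ℝ) (ψ : ℝ → ℝ) (hψnonneg : ∀ u, 0 ≤ ψ u)
    (hψ0 : Tendsto ψ (nhdsWithin 0 (Set.Ioi 0)) (nhds 0))
    (hfexp : ∀ x : ℝ, |x - K| ≤ u₀ →
      f x = K + A * (x - K) + φ x ∧ |φ x| ≤ ψ |x - K| * |x - K|)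
    (hint : Integrable (fun ω => Real.log |(1 - α) * A + α + (1 - A) * l * ξ0 ω|) P)
    (hexp : -∫ ω, Real.log |(1 - α) * A + α + (1 - A) * l * ξ0 ω| ∂P
      > ((k : ℝ) - 1) * Real.log |A|)
    (γ : ℝ) (hγ : γ ∈ Set.Ioo (0:ℝ) 1) :
    ∃ δ₀ > (0:ℝ), ∃ Ωγ : Set Ω, MeasurableSet Ωγ ∧ P Ωγ > ENNReal.ofReal (1 - γ) ∧
      ∀ x₀ : ℝ, |x₀ - K| ≤ δ₀ →
        ∀ x : ℕ → Ω → ℝ, (∀ ω, x 0 ω = x₀) →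
          (∀ n ω, x (n + 1) ω =
            if k ∣ (n + 1) then
              (1 - α - l * ξ (n + 1) ω) * f (x n ω) + (α + l * ξ (n + 1) ω) * x n ω
            else f (x n ω)) →
          ∀ ω ∈ Ωγ, Tendsto (fun n => x n ω) atTop (nhds K) := by
  obtain ⟨hα0, hα1⟩ := hα
  obtain ⟨hγ0, hγ1⟩ := hγ
  set g : ℝ → ℝ := fun w => (1 - α) * A + α + (1 - A) * l * w with hg
  have hgmeas : Measurable g := by fun_prop
  set I : ℝ := ∫ ω, Real.log |(1 - α) * A + α + (1 - A) * l * ξ0 ω| ∂P with hI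
  set c : ℝ := -(I + ((k : ℝ) - 1) * Real.log |A|) with hc
  have hcpos : 0 < c := by simp only [hc]; linarith [hexp]
  have hApos : (0:ℝ) < |A| := lt_of_lt_of_le one_pos hA
  have hk1 : (1:ℝ) ≤ (k:ℝ) := by exact_mod_cast hk
  set ε₁ : ℝ := min 1 (c / (4 * k)) with hε₁
  have hε₁pos : 0 < ε₁ := lt_min one_pos (by positivity)
  have hε₁le1 : ε₁ ≤ 1 := min_le_left _ _
  have hε₁c : ((k:ℝ) - 1) * ε₁ ≤ c / 4 := by
    have h1 : ε₁ ≤ c / (4 * k) := min_le_right _ _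
    have h2 : ((k:ℝ) - 1) * ε₁ ≤ (k:ℝ) * (c / (4 * k)) := by
      nlinarith [hε₁pos]
    have h3 : (k:ℝ) * (c / (4 * k)) = c / 4 := by field_simp
    linarith
  set B : ℝ := |(1 - α) * A + α| + |1 - A| * l with hB
  have hB0 : 0 ≤ B := by positivity
  have hgb : ∀ w : ℝ, |w| ≤ 1 → |g w| ≤ B := by
    intro w hw
    simp only [hg, hB]
    calc |(1 - α) * A + α + (1 - A) * l * w| ≤ |(1 - α) * A + α| + |(1 - A) * l * w| :=
          abs_add_le _ _
      _ ≤ |(1 - α) * A + α| + |1 - A| * l := by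
          rw [abs_mul, abs_mul, abs_of_nonneg hl]
          nlinarith [abs_nonneg (1 - A), abs_nonneg w,
            mul_le_mul_of_nonneg_left hw (mul_nonneg (abs_nonneg (1 - A)) hl)]
  set F : ℕ → Ω → ℝ := fun n ω => max (Real.log (1 / (n + 1)) - Real.log |g (ξ0 ω)|) 0 with hF
  have hlog1 : ∀ n : ℕ, Real.log (1 / ((n:ℝ) + 1)) ≤ 0 :=
    fun n => Real.log_nonpos (by positivity)
      (by rw [div_le_one (by positivity)]; linarith [Nat.cast_nonneg (α := ℝ) n])
  have hFmeas : ∀ n, Measurable (F n) := by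
    intro n
    exact (measurable_const.sub
      (Real.measurable_log.comp (hgmeas.comp hξ0meas).abs)).max measurable_const
  have hFbd : ∀ n ω, ‖F n ω‖ ≤ abs (Real.log |g (ξ0 ω)|) := by
    intro n ω
    set L := Real.log |g (ξ0 ω)| with hL
    have h0 : 0 ≤ F n ω := le_max_right _ _
    rw [Real.norm_eq_abs, abs_of_nonneg h0]
    rcases le_or_gt (Real.log (1 / ((n:ℕ) + 1)) - L) 0 with h | h
    · have : F n ω = 0 := max_eq_right h
      rw [this]; positivity
    · have hFe : F n ω = Real.log (1 / ((n:ℕ) + 1)) - L := max_eq_left (le_of_lt h)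
      rw [hFe]
      have h1 := hlog1 n
      have h2 := neg_abs_le L
      have h3 := le_abs_self L
      push_cast at h1 ⊢
      linarith
  have hFlim : ∀ ω, Tendsto (fun n => F n ω) atTop (nhds 0) := by
    intro ω
    have hlogtend : Tendsto (fun n : ℕ => Real.log (1 / ((n:ℝ) + 1))) atTop atBot := by
      have h1 : Tendsto (fun n : ℕ => ((n:ℝ) + 1)) atTop atTop :=
        tendsto_atTop_add_const_right _ 1 tendsto_natCast_atTop_atTop
      have h2 : Tendsto (fun n : ℕ => Real.log ((n:ℝ) + 1)) atTop atTop :=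
        Real.tendsto_log_atTop.comp h1
      have h3 : (fun n : ℕ => Real.log (1 / ((n:ℝ) + 1)))
          = fun n : ℕ => -Real.log ((n:ℝ) + 1) := by
        funext n; rw [one_div, Real.log_inv]
      rw [h3]
      exact tendsto_neg_atTop_atBot.comp h2
    have hev : ∀ᶠ n in atTop, F n ω = 0 := by
      filter_upwards [hlogtend.eventually_le_atBot (Real.log |g (ξ0 ω)|)] with n hn
      exact max_eq_right (by push_cast at hn ⊢; linarith)
    exact Tendsto.congr' (hev.mono fun n hn => hn.symm) tendsto_const_nhds
  have hDCT : Tendsto (fun n => ∫ ω, F n ω ∂P) atTop (nhds 0) := by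
    have h := MeasureTheory.tendsto_integral_of_dominated_convergence
      (F := F) (bound := fun ω => abs (Real.log |g (ξ0 ω)|))
      (fun n => (hFmeas n).aestronglyMeasurable)
      hint.abs
      (fun n => Filter.Eventually.of_forall (hFbd n))
      (Filter.Eventually.of_forall hFlim)
    simpa using h
  -- choose ρ
  obtain ⟨n₀, hn₀⟩ := (hDCT.eventually_lt_const (show (0:ℝ) < c / 4 by positivity)).exists
  set ρ : ℝ := 1 / ((n₀ : ℝ) + 1) with hρ
  have hρpos : 0 < ρ := by positivity
  have hρ1 : ρ ≤ 1 := by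
    rw [hρ, div_le_one (by positivity)]
    linarith [Nat.cast_nonneg (α := ℝ) n₀]
  set ε₂ : ℝ := ρ * min 1 (c / 4) with hε₂
  have hε₂pos : 0 < ε₂ := by
    apply mul_pos hρpos (lt_min one_pos (by positivity))
  have hε₂ρ : ε₂ ≤ ρ := by
    have := min_le_left 1 (c / 4)
    nlinarith [hρpos]
  have hε₂c : ε₂ / ρ ≤ c / 4 := by
    rw [hε₂, mul_comm, mul_div_assoc, div_self (ne_of_gt hρpos), mul_one]
    exact min_le_right _ _
  -- the function G
  set G : ℝ → ℝ := fun w => Real.log (max |g w| ρ + ε₂) with hG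
  have hGmeas : Measurable G :=
    Real.measurable_log.comp ((hgmeas.abs.max measurable_const).add_const _)
  have hGbd : ∀ w : ℝ, |w| ≤ 1 → Real.log ρ ≤ G w ∧ G w ≤ Real.log (B + 2) := by
    intro w hw
    have h1 : ρ ≤ max |g w| ρ + ε₂ := le_add_of_le_of_nonneg (le_max_right _ _) (le_of_lt hε₂pos)
    have h2 : max |g w| ρ + ε₂ ≤ B + 2 := by
      have := hgb w hw
      have h3 : max |g w| ρ ≤ B + 1 := max_le (by linarith) (by linarith)
      linarith [hε₂ρ, hρ1]
    exact ⟨Real.log_le_log hρpos h1, Real.log_le_log (by positivity) h2⟩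
  have hGabs : ∀ w : ℝ, |w| ≤ 1 → |G w| ≤ |Real.log ρ| + |Real.log (B + 2)| := by
    intro w hw
    obtain ⟨h1, h2⟩ := hGbd w hw
    rw [abs_le]
    constructor
    · linarith [neg_abs_le (Real.log ρ), abs_nonneg (Real.log (B + 2))]
    · linarith [le_abs_self (Real.log (B + 2)), abs_nonneg (Real.log ρ)]
  -- pointwise integral comparison
  have hGpt : ∀ ω, G (ξ0 ω) ≤ Real.log |g (ξ0 ω)| + F n₀ ω + ε₂ / ρ := by
    intro ω
    set v : ℝ := max |g (ξ0 ω)| ρ with hv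
    have hvρ : ρ ≤ v := le_max_right _ _
    have hvpos : 0 < v := lt_of_lt_of_le hρpos hvρ
    have h1 : G (ξ0 ω) ≤ Real.log v + ε₂ / v := aux_log_add_le hvpos (le_of_lt hε₂pos)
    have h2 : ε₂ / v ≤ ε₂ / ρ := div_le_div_of_nonneg_left (le_of_lt hε₂pos) hρpos hvρ
    have h3 : Real.log v ≤ Real.log |g (ξ0 ω)| + F n₀ ω := by
      rcases le_or_gt ρ |g (ξ0 ω)| with h | h
      · rw [hv, max_eq_left h]
        have : (0:ℝ) ≤ F n₀ ω := le_max_right _ _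
        linarith
      · rw [hv, max_eq_right (le_of_lt h)]
        have h4 : Real.log ρ - Real.log |g (ξ0 ω)| ≤ F n₀ ω := le_max_left _ _
        simp only [hρ] at h4 ⊢
        linarith
    linarith
  -- integrability
  have hFint : Integrable (F n₀) P :=
    Integrable.mono' hint.abs (hFmeas n₀).aestronglyMeasurable
      (Filter.Eventually.of_forall (hFbd n₀))
  have hGint0 : Integrable (fun ω => G (ξ0 ω)) P := by
    apply Integrable.mono' (integrable_const (|Real.log ρ| + |Real.log (B + 2)|))
      (hGmeas.comp hξ0meas).aestronglyMeasurable
    exact Filter.Eventually.of_forall fun ω => by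
      rw [Real.norm_eq_abs]; exact hGabs (ξ0 ω) (hbound0 ω)
  have hEG : ∫ ω, G (ξ0 ω) ∂P ≤ I + c / 4 + c / 4 := by
    have h1 : ∫ ω, G (ξ0 ω) ∂P ≤
        ∫ ω, (Real.log |g (ξ0 ω)| + F n₀ ω + ε₂ / ρ) ∂P := by
      apply integral_mono hGint0 ((hint.add hFint).add (integrable_const _)) hGpt
    have ha : ∫ ω, (Real.log |g (ξ0 ω)| + F n₀ ω + ε₂ / ρ) ∂P
        = (∫ ω, (Real.log |g (ξ0 ω)| + F n₀ ω) ∂P) + ∫ _ω, (ε₂ / ρ) ∂P :=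
      integral_add (hint.add hFint) (integrable_const _)
    have hb : ∫ ω, (Real.log |g (ξ0 ω)| + F n₀ ω) ∂P = I + ∫ ω, F n₀ ω ∂P :=
      integral_add hint hFint
    have hconst : ∫ _ω, (ε₂ / ρ) ∂P = ε₂ / ρ := by simp
    rw [ha, hb, hconst] at h1
    linarith [hn₀, hε₂c]
  -- the constant D and the SLLN variables
  set D : ℝ := ((k:ℝ) - 1) * Real.log (|A| + ε₁) with hD
  have hDle : D ≤ ((k:ℝ) - 1) * Real.log |A| + c / 4 := by
    have h1 : Real.log (|A| + ε₁) ≤ Real.log |A| + ε₁ / |A| :=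
      aux_log_add_le hApos (le_of_lt hε₁pos)
    have h2 : ε₁ / |A| ≤ ε₁ := div_le_self (le_of_lt hε₁pos) hA
    have h3 : ((k:ℝ) - 1) * Real.log (|A| + ε₁) ≤ ((k:ℝ) - 1) * (Real.log |A| + ε₁) :=
      mul_le_mul_of_nonneg_left (by linarith) (by linarith)
    have h4 : ((k:ℝ) - 1) * (Real.log |A| + ε₁)
        = ((k:ℝ) - 1) * Real.log |A| + ((k:ℝ) - 1) * ε₁ := by ring
    rw [hD]
    linarith [hε₁c]
  set X : ℕ → Ω → ℝ := fun s ω => G (ξ ((s + 1) * k) ω) + D with hX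
  have hGDmeas : Measurable (fun w => G w + D) := hGmeas.add_const _
  have hXmeas : ∀ s, Measurable (X s) := fun s => hGDmeas.comp (hξmeas _)
  have hXident : ∀ s, IdentDistrib (X s) (X 0) P P := by
    intro s
    have h1 : IdentDistrib (ξ ((s + 1) * k)) (ξ ((0 + 1) * k)) P P :=
      (hident _).trans (hident _).symm
    exact h1.comp hGDmeas
  have hXindep : Pairwise (Function.onFun (IndepFun · · P) X) := by
    intro i j hij
    have hne : (i + 1) * k ≠ (j + 1) * k := by
      intro hEq
      exact hij (by
        have := Nat.eq_of_mul_eq_mul_right (show 0 < k by omega) hEq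
        omega)
    have h1 : IndepFun (ξ ((i + 1) * k)) (ξ ((j + 1) * k)) P := hindep.indepFun hne
    exact h1.comp hGDmeas hGDmeas
  have hGintξ : ∀ n, Integrable (fun ω => G (ξ n ω)) P := by
    intro n
    apply Integrable.mono' (integrable_const (|Real.log ρ| + |Real.log (B + 2)|))
      (hGmeas.comp (hξmeas n)).aestronglyMeasurable
    exact Filter.Eventually.of_forall fun ω => by
      rw [Real.norm_eq_abs]; exact hGabs (ξ n ω) (hbound n ω)
  have hXint : Integrable (X 0) P := (hGintξ ((0 + 1) * k)).add (integrable_const D)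
  have hEX : ∫ ω, X 0 ω ∂P ≤ -(c / 4) := by
    have h1 : ∫ ω, X 0 ω ∂P = (∫ ω, G (ξ ((0 + 1) * k) ω) ∂P) + ∫ _ω, D ∂P :=
      integral_add (hGintξ _) (integrable_const _)
    have h1' : ∫ _ω, D ∂P = D := by simp
    have h2 : ∫ ω, G (ξ ((0 + 1) * k) ω) ∂P = ∫ ω, G (ξ0 ω) ∂P :=
      ((hident _).comp hGmeas).integral_eq
    rw [h1, h1', h2]
    have hceq : I + ((k:ℝ) - 1) * Real.log |A| = -c := by rw [hc]; ring
    linarith [hEG, hDle]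
  have hSLLN := strong_law_ae_real X hXint hXindep hXident
  set S : ℕ → Ω → ℝ := fun m ω => ∑ s ∈ Finset.range m, X s ω with hS
  have hSmeas : ∀ m, Measurable (S m) := fun m => Finset.measurable_sum _ fun s _ => hXmeas s
  set Aset : ℕ → Set Ω := fun N => {ω | ∀ m : ℕ, S m ω + c / 8 * m ≤ N} with hAset
  have hAmeas : ∀ N, MeasurableSet (Aset N) := by
    intro N
    have hrw : Aset N = ⋂ m : ℕ, {ω | S m ω + c / 8 * m ≤ N} := by
      ext ω; simp [hAset, Set.mem_iInter]
    rw [hrw]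
    exact MeasurableSet.iInter fun m =>
      measurableSet_le ((hSmeas m).add_const _) measurable_const
  have hAmono : Monotone Aset := by
    intro N N' hNN ω hω m
    exact le_trans (hω m) (by exact_mod_cast hNN)
  have hcover : ∀ᵐ ω ∂P, ω ∈ ⋃ N, Aset N := by
    filter_upwards [hSLLN] with ω hω
    have hμlt : ∫ ω, X 0 ω ∂P < -(c / 8) := lt_of_le_of_lt hEX (by linarith)
    have hev : ∀ᶠ m : ℕ in atTop, (∑ s ∈ Finset.range m, X s ω) / m < -(c / 8) :=
      hω.eventually_lt_const hμlt
    obtain ⟨m₀, hm₀⟩ := eventually_atTop.mp hev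
    set T : ℝ := ∑ s ∈ Finset.range (m₀ + 1), |X s ω| with hT
    have hT0 : 0 ≤ T := Finset.sum_nonneg fun s _ => abs_nonneg _
    obtain ⟨N, hN⟩ := exists_nat_ge (T + c / 8 * (m₀ + 1))
    refine Set.mem_iUnion.mpr ⟨N, fun m => ?_⟩
    rcases lt_or_ge m (m₀ + 1) with hm | hm
    · have h1 : S m ω ≤ T := by
        calc S m ω ≤ ∑ s ∈ Finset.range m, |X s ω| :=
              Finset.sum_le_sum fun s _ => le_abs_self _
          _ ≤ T := Finset.sum_le_sum_of_subset_of_nonneg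
              (Finset.range_subset_range.mpr (by omega)) fun s _ _ => abs_nonneg _
      have hmle : (m : ℝ) ≤ (m₀ : ℝ) + 1 := by exact_mod_cast Nat.le_of_lt_succ (by omega)
      have h2 : c / 8 * m ≤ c / 8 * ((m₀:ℝ) + 1) :=
        mul_le_mul_of_nonneg_left hmle (by positivity)
      push_cast at hN ⊢
      linarith
    · have h3 := hm₀ m (by omega)
      have hmpos : (0:ℝ) < (m : ℝ) := by
        have : 1 ≤ m := by omega
        exact_mod_cast this
      have h4 : S m ω < -(c / 8) * m := by
        have := (div_lt_iff₀ hmpos).mp h3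
        simpa [hS] using this
      have h5 : (0:ℝ) ≤ (N : ℝ) := Nat.cast_nonneg N
      nlinarith
  have hUnion : P (⋃ N, Aset N) = 1 := by
    rw [← prob_compl_eq_zero_iff (MeasurableSet.iUnion hAmeas)]
    have h0 := ae_iff.mp hcover
    simpa [Set.compl_def] using h0
  have htend := tendsto_measure_iUnion_atTop (μ := P) hAmono
  rw [hUnion] at htend
  have hlt1 : ENNReal.ofReal (1 - γ) < 1 := by
    rw [ENNReal.ofReal_lt_one]; linarith
  obtain ⟨N, hNγ⟩ := (htend.eventually_const_lt hlt1).exists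
  -- small nonlinearity threshold
  set ε₃ : ℝ := min ε₁ (ε₂ / (1 + l)) with hε₃
  have h1l : (0:ℝ) < 1 + l := by linarith only [hl]
  have hε₃pos : 0 < ε₃ := lt_min hε₁pos (by positivity)
  have hε₃ε₁ : ε₃ ≤ ε₁ := min_le_left _ _
  have hε₃ε₂ : (1 + l) * ε₃ ≤ ε₂ := by
    have hm := min_le_right ε₁ (ε₂ / (1 + l))
    calc (1 + l) * ε₃ ≤ (1 + l) * (ε₂ / (1 + l)) :=
          mul_le_mul_of_nonneg_left hm (le_of_lt h1l)
      _ = ε₂ := by field_simp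
  have hψev : ∀ᶠ v in nhdsWithin 0 (Set.Ioi 0), ψ v < ε₃ := hψ0.eventually_lt_const hε₃pos
  obtain ⟨u₁, hu₁pos, hu₁⟩ := Metric.mem_nhdsWithin_iff.mp hψev
  set u : ℝ := min u₁ u₀ with hu
  have hupos : 0 < u := lt_min hu₁pos hu₀
  have huu₀ : u ≤ u₀ := min_le_right _ _
  have hψu : ∀ v : ℝ, 0 < v → v < u → ψ v < ε₃ := by
    intro v hv hvu
    apply hu₁
    refine ⟨?_, hv⟩
    rw [Metric.mem_ball, Real.dist_eq, sub_zero, abs_of_pos hv]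
    exact lt_of_lt_of_le hvu (min_le_left _ _)
  have hφbd : ∀ y : ℝ, |y - K| < u → |φ y| ≤ ε₃ * |y - K| := by
    intro y hy
    rcases eq_or_ne y K with heq | hne
    · have h0 : |y - K| ≤ u₀ := by rw [heq, sub_self, abs_zero]; exact le_of_lt hu₀
      have h1 := (hfexp y h0).1
      rw [heq, hfK] at h1
      have hφK : φ K = 0 := by
        have h2 : A * (K - K) = 0 := by ring
        rw [h2] at h1
        linarith only [h1]
      rw [heq, hφK, abs_zero]
      positivity
    · have habs : 0 < |y - K| := abs_pos.mpr (sub_ne_zero.mpr hne)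
      have h0 : |y - K| ≤ u₀ := le_trans (le_of_lt hy) huu₀
      have h1 := (hfexp y h0).2
      have h2 : ψ |y - K| ≤ ε₃ := le_of_lt (hψu _ habs hy)
      calc |φ y| ≤ ψ |y - K| * |y - K| := h1
        _ ≤ ε₃ * |y - K| := mul_le_mul_of_nonneg_right h2 (abs_nonneg _)
  have hstep1 : ∀ y : ℝ, |y - K| < u → |f y - K| ≤ (|A| + ε₁) * |y - K| := by
    intro y hy
    have h0 : |y - K| ≤ u₀ := le_trans (le_of_lt hy) huu₀
    have h1 := (hfexp y h0).1
    have h2 : f y - K = A * (y - K) + φ y := by rw [h1]; ring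
    calc |f y - K| = |A * (y - K) + φ y| := by rw [h2]
      _ ≤ |A * (y - K)| + |φ y| := abs_add_le _ _
      _ ≤ |A| * |y - K| + ε₃ * |y - K| := by
          rw [abs_mul]; linarith only [hφbd y hy]
      _ ≤ (|A| + ε₁) * |y - K| := by
          have h9 : ε₃ * |y - K| ≤ ε₁ * |y - K| :=
            mul_le_mul_of_nonneg_right hε₃ε₁ (abs_nonneg _)
          linarith only [h9]
  have hstep2 : ∀ (y w : ℝ), |y - K| < u → |w| ≤ 1 →
      |(1 - α - l * w) * f y + (α + l * w) * y - K| ≤ (max |g w| ρ + ε₂) * |y - K| := by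
    intro y w hy hw
    have h0 : |y - K| ≤ u₀ := le_trans (le_of_lt hy) huu₀
    have h1 := (hfexp y h0).1
    have h2 : (1 - α - l * w) * f y + (α + l * w) * y - K
        = g w * (y - K) + (1 - α - l * w) * φ y := by
      simp only [hg]
      rw [h1]; ring
    have hw2 := abs_le.mp hw
    have hlw1 : l * w ≤ l := by
      have h8 := mul_le_mul_of_nonneg_left hw2.2 hl
      linarith only [h8]
    have hlw2 : -l ≤ l * w := by
      have h8 := mul_le_mul_of_nonneg_left hw2.1 hl
      linarith only [h8]
    have h3 : |1 - α - l * w| ≤ 1 + l := by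
      rw [abs_le]
      constructor <;> linarith only [hlw1, hlw2, hα0, hα1]
    have h5 : |φ y| ≤ ε₃ * |y - K| := hφbd y hy
    calc |(1 - α - l * w) * f y + (α + l * w) * y - K|
        = |g w * (y - K) + (1 - α - l * w) * φ y| := by rw [h2]
      _ ≤ |g w * (y - K)| + |(1 - α - l * w) * φ y| := abs_add_le _ _
      _ = |g w| * |y - K| + |1 - α - l * w| * |φ y| := by rw [abs_mul, abs_mul]
      _ ≤ |g w| * |y - K| + (1 + l) * (ε₃ * |y - K|) := by
          have h6 : |1 - α - l * w| * |φ y| ≤ (1 + l) * (ε₃ * |y - K|) :=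
            mul_le_mul h3 h5 (abs_nonneg _) (by positivity)
          linarith only [h6]
      _ ≤ (max |g w| ρ + ε₂) * |y - K| := by
          have h7 : |g w| * |y - K| ≤ max |g w| ρ * |y - K| :=
            mul_le_mul_of_nonneg_right (le_max_left _ _) (abs_nonneg _)
          have h8 : (1 + l) * ε₃ * |y - K| ≤ ε₂ * |y - K| :=
            mul_le_mul_of_nonneg_right hε₃ε₂ (abs_nonneg _)
          linarith only [h7, h8]
  -- the contraction constant over a block
  set Cb : ℝ := (|A| + ε₁) ^ k with hCb
  have hAε1 : (1:ℝ) ≤ |A| + ε₁ := by linarith only [hA, hε₁pos]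
  have hCb1 : (1:ℝ) ≤ Cb := one_le_pow₀ hAε1
  set δ₀ : ℝ := u * Real.exp (-(N:ℝ)) / (2 * Cb) with hδ₀
  have hδ₀pos : 0 < δ₀ :=
    div_pos (mul_pos hupos (Real.exp_pos _)) (by linarith only [hCb1])
  refine ⟨δ₀, hδ₀pos, Aset N, hAmeas N, hNγ, ?_⟩
  intro x₀ hx₀ x hx0 hxrec ω hω
  have hSN : ∀ m : ℕ, S m ω ≤ (N:ℝ) - c / 8 * m := fun m => by
    have h9 := hω m; linarith only [h9]
  have hbd_aux : ∀ n : ℕ, δ₀ * Real.exp (S (n / k) ω) * (|A| + ε₁) ^ (n % k) ≤ u / 2 := by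
    intro n
    have h1 : Real.exp (S (n / k) ω) ≤ Real.exp (N:ℝ) := by
      apply Real.exp_le_exp.mpr
      have h2 := hSN (n / k)
      have h3 : 0 ≤ c / 8 * ((n / k : ℕ) : ℝ) := by positivity
      linarith only [h2, h3]
    have h2 : (|A| + ε₁) ^ (n % k) ≤ Cb := by
      rw [hCb]
      exact pow_le_pow_right₀ hAε1 (le_of_lt (Nat.mod_lt _ (by omega)))
    have hCbne : Cb ≠ 0 := by
      intro h0
      rw [h0] at hCb1
      exact absurd hCb1 (by norm_num)
    calc δ₀ * Real.exp (S (n / k) ω) * (|A| + ε₁) ^ (n % k)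
        ≤ δ₀ * Real.exp (N:ℝ) * Cb :=
          mul_le_mul (mul_le_mul_of_nonneg_left h1 (le_of_lt hδ₀pos)) h2
            (by positivity) (by positivity)
      _ = u / 2 := by
          rw [hδ₀, Real.exp_neg]
          field_simp
  have hkey : ∀ n : ℕ, |x n ω - K| ≤ δ₀ * Real.exp (S (n / k) ω) * (|A| + ε₁) ^ (n % k) := by
    intro n
    induction n with
    | zero =>
      have h1 : S 0 ω = 0 := by simp [hS]
      rw [hx0 ω, Nat.zero_div, Nat.zero_mod, h1, Real.exp_zero, pow_zero, mul_one, mul_one]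
      exact hx₀
    | succ n ih =>
      have hyu : |x n ω - K| < u :=
        lt_of_le_of_lt (le_trans ih (hbd_aux n)) (by linarith only [hupos])
      rw [hxrec n ω]
      by_cases hdvd : k ∣ (n + 1)
      · obtain ⟨hmod, hmod1, hdiv1⟩ := aux_nat_dvd hk hdvd
        rw [if_pos hdvd]
        have hn1 : n + 1 = (n / k + 1) * k := by
          have h4 := Nat.div_mul_cancel hdvd
          rw [hdiv1] at h4
          exact h4.symm
        have hmaxpos : (0:ℝ) < max |g (ξ (n + 1) ω)| ρ + ε₂ :=
          lt_of_lt_of_le hρpos (le_add_of_le_of_nonneg (le_max_right _ _) (le_of_lt hε₂pos))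
        calc |(1 - α - l * ξ (n + 1) ω) * f (x n ω) + (α + l * ξ (n + 1) ω) * x n ω - K|
            ≤ (max |g (ξ (n + 1) ω)| ρ + ε₂) * |x n ω - K| :=
              hstep2 (x n ω) (ξ (n + 1) ω) hyu (hbound (n + 1) ω)
          _ ≤ (max |g (ξ (n + 1) ω)| ρ + ε₂) *
                (δ₀ * Real.exp (S (n / k) ω) * (|A| + ε₁) ^ (n % k)) :=
              mul_le_mul_of_nonneg_left ih (le_of_lt hmaxpos)
          _ = δ₀ * (Real.exp (S (n / k) ω) *
                ((max |g (ξ (n + 1) ω)| ρ + ε₂) * (|A| + ε₁) ^ (k - 1))) := by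
              rw [hmod]; ring
          _ = δ₀ * Real.exp (S ((n + 1) / k) ω) * (|A| + ε₁) ^ ((n + 1) % k) := by
              rw [hmod1, hdiv1, pow_zero, mul_one]
              have hXval : X (n / k) ω
                  = Real.log (max |g (ξ (n + 1) ω)| ρ + ε₂) + D := by
                simp only [hX, hG]
                rw [← hn1]
              have hSsucc : S (n / k + 1) ω = S (n / k) ω + X (n / k) ω := by
                simp [hS, Finset.sum_range_succ]
              have hkc : ((k:ℝ) - 1) = ((k - 1 : ℕ) : ℝ) := by
                push_cast [Nat.cast_sub hk]; ring
              have hpow : Real.exp D = (|A| + ε₁) ^ (k - 1) := by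
                rw [hD, hkc, mul_comm, ← Real.rpow_def_of_pos (by linarith only [hAε1]),
                  Real.rpow_natCast]
              rw [hSsucc, Real.exp_add, hXval, Real.exp_add, Real.exp_log hmaxpos, hpow]
      · obtain ⟨hmod1, hdiv1⟩ := aux_nat_ndvd hk hdvd
        rw [if_neg hdvd]
        calc |f (x n ω) - K| ≤ (|A| + ε₁) * |x n ω - K| := hstep1 _ hyu
          _ ≤ (|A| + ε₁) * (δ₀ * Real.exp (S (n / k) ω) * (|A| + ε₁) ^ (n % k)) :=
              mul_le_mul_of_nonneg_left ih (by linarith only [hAε1])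
          _ = δ₀ * Real.exp (S ((n + 1) / k) ω) * (|A| + ε₁) ^ ((n + 1) % k) := by
              rw [hdiv1, hmod1, pow_succ]; ring
  -- convergence
  have hub : ∀ n : ℕ, |x n ω - K| ≤
      (δ₀ * Cb * Real.exp (N:ℝ)) * Real.exp (-(c / 8) * ((n / k : ℕ) : ℝ)) := by
    intro n
    have h1 : Real.exp (S (n / k) ω) ≤ Real.exp ((N:ℝ) - c / 8 * ((n / k : ℕ) : ℝ)) :=
      Real.exp_le_exp.mpr (hSN _)
    have h2 : (|A| + ε₁) ^ (n % k) ≤ Cb := by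
      rw [hCb]
      exact pow_le_pow_right₀ hAε1 (le_of_lt (Nat.mod_lt _ (by omega)))
    calc |x n ω - K| ≤ δ₀ * Real.exp (S (n / k) ω) * (|A| + ε₁) ^ (n % k) := hkey n
      _ ≤ δ₀ * Real.exp ((N:ℝ) - c / 8 * ((n / k : ℕ) : ℝ)) * Cb :=
          mul_le_mul (mul_le_mul_of_nonneg_left h1 (le_of_lt hδ₀pos)) h2
            (by positivity) (by positivity)
      _ = (δ₀ * Cb * Real.exp (N:ℝ)) * Real.exp (-(c / 8) * ((n / k : ℕ) : ℝ)) := by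
          rw [show (N:ℝ) - c / 8 * ((n / k : ℕ) : ℝ)
              = (N:ℝ) + (-(c / 8) * ((n / k : ℕ) : ℝ)) by ring, Real.exp_add]
          ring
  have hdivtend : Tendsto (fun n : ℕ => n / k) atTop atTop := by
    apply tendsto_atTop_atTop.mpr
    intro b
    exact ⟨b * k, fun n hn => (Nat.le_div_iff_mul_le (by omega)).mpr hn⟩
  have hexp2 : Tendsto (fun m : ℕ => Real.exp (-(c / 8) * (m : ℝ))) atTop (nhds 0) := by
    apply Real.tendsto_exp_atBot.comp
    have h1 : Tendsto (fun m : ℕ => (c / 8) * (m : ℝ)) atTop atTop :=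
      Tendsto.const_mul_atTop (by positivity) tendsto_natCast_atTop_atTop
    have h2 : (fun m : ℕ => -(c / 8) * (m : ℝ)) = fun m : ℕ => -((c / 8) * (m : ℝ)) := by
      funext m; ring
    rw [h2]
    exact tendsto_neg_atTop_atBot.comp h1
  have htail : Tendsto (fun n : ℕ =>
      (δ₀ * Cb * Real.exp (N:ℝ)) * Real.exp (-(c / 8) * ((n / k : ℕ) : ℝ))) atTop (nhds 0) := by
    have h3 := (hexp2.comp hdivtend).const_mul (δ₀ * Cb * Real.exp (N:ℝ))
    simpa [Function.comp] using h3
  have habs2 : Tendsto (fun n => |x n ω - K|) atTop (nhds 0) :=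
    squeeze_zero (fun n => abs_nonneg _) hub htail
  rw [tendsto_iff_dist_tendsto_zero]
  simpa [Real.dist_eq] using habs2
end

section
/- Let ξ be a Bernoulli random variable taking each of the values +1 and −1 with probability 1/2, let 𝒜 > 1, α ∈ [0,1), l > 0 with l·(𝒜−1) ≠ (1−α)·𝒜 + α, and k ∈ ℕ. Then −E[ln|(1−α)·𝒜 + α + (1−𝒜)·l·ξ|] = −(1/2)·ln|[(1−α)·𝒜 + α]² − (1−𝒜)²·l²|, and the stabilization condition −E[ln|(1−α)·𝒜 + α + (1−𝒜)·l·ξ|] > (k−1)·ln 𝒜 holds if and only if ([(1−α)·𝒜 + α]² − 𝒜^{−2(k−1)}) / (1−𝒜)² < l² < ([(1−α)·𝒜 + α]² + 𝒜^{−2(k−1)}) / (1−𝒜)². -/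
open MeasureTheory ProbabilityTheory

/-- Remark 6 (Bernoulli case for PBC): for ξ taking values ±1 with probability 1/2 each
and `𝒜 > 1`,
`-E[ln|(1−α)𝒜+α+(1−𝒜)lξ|] = -(1/2) ln|[(1−α)𝒜+α]² − (1−𝒜)²l²|`, and the stabilization
condition `-E[...] > (k−1) ln 𝒜` holds iff
`([(1−α)𝒜+α]² − 𝒜^{−2(k−1)})/(1−𝒜)² < l² < ([(1−α)𝒜+α]² + 𝒜^{−2(k−1)})/(1−𝒜)²`. -/
theorem stmt_12
    {Ω : Type*} [MeasurableSpace Ω] (P : Measure Ω) [IsProbabilityMeasure P]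
    (ξ : Ω → ℝ) (hmeas : Measurable ξ)
    (h1 : P {ω | ξ ω = 1} = 1/2) (h2 : P {ω | ξ ω = -1} = 1/2)
    (A : ℝ) (hA : 1 < A)
    (α : ℝ) (hα : α ∈ Set.Ico (0:ℝ) 1)
    (l : ℝ) (hl : 0 < l) (hne : l * (A - 1) ≠ (1 - α) * A + α)
    (k : ℕ) (hk : 1 ≤ k) :
    (-∫ ω, Real.log |(1 - α) * A + α + (1 - A) * l * ξ ω| ∂P
        = -(1/2) * Real.log |((1 - α) * A + α) ^ 2 - (1 - A) ^ 2 * l ^ 2|) ∧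
    ((-∫ ω, Real.log |(1 - α) * A + α + (1 - A) * l * ξ ω| ∂P
        > ((k : ℝ) - 1) * Real.log A) ↔
      ((((1 - α) * A + α) ^ 2 - (A ^ (2 * (k - 1)))⁻¹) / (1 - A) ^ 2 < l ^ 2 ∧
        l ^ 2 < (((1 - α) * A + α) ^ 2 + (A ^ (2 * (k - 1)))⁻¹) / (1 - A) ^ 2)) := by
  obtain ⟨hα0, hα1⟩ := hα
  set c : ℝ := (1 - α) * A + α with hc
  set b : ℝ := (1 - A) * l with hb
  have hcpos : 0 < c := by rw [hc]; nlinarith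
  have hcmb : 0 < c - b := by rw [hc, hb]; nlinarith
  have hcpb : c + b ≠ 0 := by
    intro h
    apply hne
    rw [hc]; rw [hc, hb] at h; linarith
  have hprod : c ^ 2 - b ^ 2 ≠ 0 := by
    intro h
    exact mul_ne_zero hcpb (ne_of_gt hcmb) (by nlinarith)
  have hb2 : b ^ 2 = (1 - A) ^ 2 * l ^ 2 := by rw [hb]; ring
  -- sets
  have hS1 : MeasurableSet {ω | ξ ω = 1} := hmeas (measurableSet_singleton 1)
  have hS2 : MeasurableSet {ω | ξ ω = -1} := hmeas (measurableSet_singleton (-1))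
  have hdisj : Disjoint {ω | ξ ω = 1} {ω | ξ ω = -1} := by
    rw [Set.disjoint_left]
    intro ω hω1 hω2
    simp only [Set.mem_setOf_eq] at hω1 hω2
    rw [hω1] at hω2; norm_num at hω2
  have hU : P ({ω | ξ ω = 1} ∪ {ω | ξ ω = -1}) = 1 := by
    rw [measure_union hdisj hS2, h1, h2]
    rw [ENNReal.add_halves]
  have hcompl : P ({ω | ξ ω = 1} ∪ {ω | ξ ω = -1})ᶜ = 0 := by
    rw [measure_compl (hS1.union hS2) (measure_ne_top _ _), hU, measure_univ, tsub_self]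
  have haemem : ∀ᵐ ω ∂P, ω ∈ {ω | ξ ω = 1} ∪ {ω | ξ ω = -1} := by
    rw [ae_iff]
    convert hcompl using 2
    ext ω; simp
  have hae : (fun ω => Real.log |c + b * ξ ω|) =ᵐ[P]
      (fun ω => Set.indicator {ω | ξ ω = 1} (fun _ => Real.log |c + b|) ω
        + Set.indicator {ω | ξ ω = -1} (fun _ => Real.log |c - b|) ω) := by
    filter_upwards [haemem] with ω hω
    rcases hω with h | h
    · simp only [Set.mem_setOf_eq] at h
      have hne' : ω ∉ {ω | ξ ω = -1} := by
        simp only [Set.mem_setOf_eq, h]; norm_num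
      simp only [Set.indicator_apply, Set.mem_setOf_eq, h]
      norm_num
    · simp only [Set.mem_setOf_eq] at h
      have hne' : ω ∉ {ω | ξ ω = 1} := by
        simp only [Set.mem_setOf_eq, h]; norm_num
      simp only [Set.indicator_apply, Set.mem_setOf_eq, h]
      norm_num
      ring_nf
  have hint : ∫ ω, Real.log |c + b * ξ ω| ∂P
      = (1/2) * Real.log |c + b| + (1/2) * Real.log |c - b| := by
    rw [integral_congr_ae hae, integral_add ((integrable_const _).indicator hS1)
        ((integrable_const _).indicator hS2),
      integral_indicator_const _ hS1, integral_indicator_const _ hS2, measureReal_def, measureReal_def, h1, h2]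
    norm_num [ENNReal.toReal_div]
  have hlog : Real.log |c + b| + Real.log |c - b| = Real.log |c ^ 2 - b ^ 2| := by
    rw [← Real.log_mul (abs_ne_zero.mpr hcpb) (abs_ne_zero.mpr (ne_of_gt hcmb)), ← abs_mul]
    congr 1
    ring
  have hintegral : ∫ ω, Real.log |c + b * ξ ω| ∂P = (1/2) * Real.log |c ^ 2 - b ^ 2| := by
    rw [hint, ← hlog]; ring
  have hsq : (0:ℝ) < (1 - A) ^ 2 := by nlinarith
  constructor
  · rw [hintegral, hb2]; ring
  · rw [hintegral, hb2]
    set ε : ℝ := (A ^ (2 * (k - 1)))⁻¹ with hε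
    have hεpos : 0 < ε := by
      rw [hε]
      exact inv_pos.mpr (pow_pos (by linarith) _)
    have hxpos : 0 < |c ^ 2 - (1 - A) ^ 2 * l ^ 2| := by
      rw [← hb2]; exact abs_pos.mpr hprod
    have hlogε : Real.log ε = -(2 * ((k:ℝ) - 1)) * Real.log A := by
      rw [hε, Real.log_inv, Real.log_pow]
      have : ((2 * (k - 1) : ℕ) : ℝ) = 2 * ((k:ℝ) - 1) := by
        push_cast [Nat.cast_sub hk]; ring
      rw [this]; ring
    have key : (-(1/2 * Real.log |c ^ 2 - (1 - A) ^ 2 * l ^ 2|) > ((k:ℝ) - 1) * Real.log A)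
        ↔ |c ^ 2 - (1 - A) ^ 2 * l ^ 2| < ε := by
      have hlt : Real.log |c ^ 2 - (1 - A) ^ 2 * l ^ 2| < Real.log ε ↔
          |c ^ 2 - (1 - A) ^ 2 * l ^ 2| < ε := Real.log_lt_log_iff hxpos hεpos
      rw [gt_iff_lt, ← hlt, hlogε]
      constructor <;> intro h <;> linarith
    have habs : |c ^ 2 - (1 - A) ^ 2 * l ^ 2| < ε ↔
        ((c ^ 2 - ε) / (1 - A) ^ 2 < l ^ 2 ∧ l ^ 2 < (c ^ 2 + ε) / (1 - A) ^ 2) := by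
      clear_value ε
      rw [abs_lt, div_lt_iff₀ hsq, lt_div_iff₀ hsq]
      constructor
      · rintro ⟨u, v⟩; constructor <;> linarith
      · rintro ⟨u, v⟩; constructor <;> linarith
    exact key.trans habs
end

section
/- Let (x_n) solve the pulsed stochastic PBC equation, where |f(z+K) − K| ≤ L·|z| for |z| ≤ u₀ (L ≥ 1), f(x) > K for x ∈ [K−u₀, K), f(x) < K for x ∈ (K, K+u₀], and l ∈ (0, min{α, 1−α}). Suppose that either (a) k = 1, α > 1 − L^{−1}, and l < L^{−1} − 1 + α, or (b) k > 1, 1 < L^k < L + 1, α ∈ (1 − L^{−k}, L^{−k+1}), and l < min{L^{−k} − 1 + α, L^{−k+1} − α}. Then for every δ with 0 < δ ≤ u₀/L^k and every initial value with |x₀ − K| ≤ δ, lim_{n→∞} x_n(ω) = K for every ω ∈ Ω. -/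
open MeasureTheory ProbabilityTheory Filter

set_option maxHeartbeats 2000000 in
/-- Theorem 6, part (i): deterministic-dominated stabilization by pulsed stochastic PBC,
for `f` crossing the equilibrium `K` from above to below, in either of the parameter
regimes (a) `k = 1`, `α > 1 − L⁻¹`, `l < L⁻¹ − 1 + α`, or
(b) `k > 1`, `1 < L^k < L + 1`, `α ∈ (1 − L^{−k}, L^{−k+1})`,
`l < min{L^{−k} − 1 + α, L^{−k+1} − α}`: convergence to `K` for every `ω ∈ Ω`. -/
theorem stmt_13
    {Ω : Type*} [MeasurableSpace Ω] (P : Measure Ω) [IsProbabilityMeasure P]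
    (ξ : ℕ → Ω → ℝ)
    (hξmeas : ∀ n, Measurable (ξ n))
    (hindep : iIndepFun ξ P)
    (hident : ∀ n m, IdentDistrib (ξ n) (ξ m) P P)
    (hbound : ∀ n ω, |ξ n ω| ≤ 1)
    (f : ℝ → ℝ) (hfpos : ∀ x, 0 ≤ f x)
    (K : ℝ) (hKpos : 0 < K) (hfK : f K = K)
    (k : ℕ) (hk : 1 ≤ k)
    (α : ℝ) (hα : α ∈ Set.Ico (0:ℝ) 1)
    (u₀ : ℝ) (hu₀ : 0 < u₀) (L : ℝ) (hL : 1 ≤ L)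
    (hLip : ∀ z : ℝ, |z| ≤ u₀ → |f (z + K) - K| ≤ L * |z|)
    (hsign1 : ∀ x : ℝ, K - u₀ ≤ x → x < K → K < f x)
    (hsign2 : ∀ x : ℝ, K < x → x ≤ K + u₀ → f x < K)
    (l : ℝ) (hl : l ∈ Set.Ioo (0:ℝ) (min α (1 - α)))
    (hcase :
      (k = 1 ∧ 1 - L⁻¹ < α ∧ l < L⁻¹ - 1 + α) ∨
      (1 < k ∧ 1 < L ^ k ∧ L ^ k < L + 1 ∧
        α ∈ Set.Ioo (1 - (L ^ k)⁻¹) ((L ^ (k - 1))⁻¹) ∧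
        l < min ((L ^ k)⁻¹ - 1 + α) ((L ^ (k - 1))⁻¹ - α)))
    (x₀ : ℝ) (x : ℕ → Ω → ℝ) (hx0 : ∀ ω, x 0 ω = x₀)
    (hrec : ∀ n ω, x (n + 1) ω =
      if k ∣ (n + 1) then
        (1 - α - l * ξ (n + 1) ω) * f (x n ω) + (α + l * ξ (n + 1) ω) * x n ω
      else f (x n ω)) :
    ∀ δ : ℝ, 0 < δ → δ ≤ u₀ / L ^ k → |x₀ - K| ≤ δ →
      ∀ ω, Tendsto (fun n => x n ω) atTop (nhds K) := by
  intro δ hδ hδu hx₀ ω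
  have hL0 : (0:ℝ) < L := lt_of_lt_of_le one_pos hL
  have hl0 : 0 < l := hl.1
  have hlα : l < α := lt_of_lt_of_le hl.2 (min_le_left _ _)
  have hl1 : l < 1 - α := lt_of_lt_of_le hl.2 (min_le_right _ _)
  set q := max (α + l) ((1 - α + l) * L - (α - l)) with hqdef
  set r := q * L ^ (k - 1) with hrdef
  have hqpos : 0 < q := lt_of_lt_of_le (by linarith) (le_max_left _ _)
  have hrnonneg : 0 ≤ r := mul_nonneg hqpos.le (pow_nonneg hL0.le _)
  have hLkeq : L ^ k = L ^ (k - 1) * L := by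
    rw [← pow_succ, Nat.sub_add_cancel hk]
  -- r < 1
  have h1 : (α + l) * L ^ (k - 1) < 1 := by
    rcases hcase with ⟨hk1, _, _⟩ | ⟨_, _, _, _, hlmin⟩
    · simp only [hk1]
      norm_num
      linarith
    · have h := (lt_min_iff.mp hlmin).2
      have := mul_lt_mul_of_pos_right (show α + l < (L ^ (k-1))⁻¹ by linarith)
        (pow_pos hL0 (k-1))
      rwa [inv_mul_cancel₀ (pow_pos hL0 (k-1)).ne'] at this
  have h2 : ((1 - α + l) * L - (α - l)) * L ^ (k - 1) < 1 := by
    rcases hcase with ⟨hk1, _, hla⟩ | ⟨_, _, _, _, hlmin⟩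
    · have hi : 1 - α + l < L⁻¹ := by linarith
      have := mul_lt_mul_of_pos_right hi hL0
      rw [inv_mul_cancel₀ hL0.ne'] at this
      simp only [hk1]
      norm_num
      nlinarith
    · have h := (lt_min_iff.mp hlmin).1
      have e1 := mul_lt_mul_of_pos_right (show 1 - α + l < (L ^ k)⁻¹ by linarith)
        (pow_pos hL0 k)
      rw [inv_mul_cancel₀ (pow_pos hL0 k).ne'] at e1
      nlinarith [mul_pos (show (0:ℝ) < α - l by linarith) (pow_pos hL0 (k-1))]
  have hr1 : r < 1 := by
    rw [hrdef, hqdef, max_mul_of_nonneg _ _ (pow_nonneg hL0.le (k-1))]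
    exact max_lt h1 h2
  -- domain bound
  have hδLk : δ * L ^ k ≤ u₀ := (le_div_iff₀ (pow_pos hL0 k)).mp hδu
  have hKu₀ : L ^ (k - 1) * δ ≤ u₀ := by
    nlinarith [mul_pos hδ (pow_pos hL0 (k-1))]
  -- single step, no pulse
  have hstepA : ∀ n, ¬ k ∣ (n+1) → |x n ω - K| ≤ u₀ →
      |x (n+1) ω - K| ≤ L * |x n ω - K| := by
    intro n hnd hb
    rw [hrec n ω, if_neg hnd]
    have := hLip (x n ω - K) hb
    simpa using this
  -- single step, pulse
  have hstepB : ∀ n, k ∣ (n+1) → |x n ω - K| ≤ u₀ →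
      |x (n+1) ω - K| ≤ q * |x n ω - K| := by
    intro n hdvd hb
    have hξ1 := (abs_le.mp (hbound (n+1) ω)).1
    have hξ2 := (abs_le.mp (hbound (n+1) ω)).2
    set β := α + l * ξ (n+1) ω with hβdef
    have hβ1 : α - l ≤ β := by nlinarith
    have hβ2 : β ≤ α + l := by nlinarith
    have hβpos : 0 < β := lt_of_lt_of_le (by linarith) hβ1
    have hβlt : β < 1 := lt_of_le_of_lt hβ2 (by linarith)
    have hrw : x (n+1) ω - K = (1-β) * (f (x n ω) - K) + β * (x n ω - K) := by
      rw [hrec n ω, if_pos hdvd]; ring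
    have hv : |f (x n ω) - K| ≤ L * |x n ω - K| := by
      have := hLip (x n ω - K) hb
      simpa using this
    have hq1' : α + l ≤ q := le_max_left _ _
    have hq2' : (1 - α + l) * L - (α - l) ≤ q := le_max_right _ _
    rcases lt_trichotomy (x n ω) K with hlt | heq | hgt
    · have hKu : K - u₀ ≤ x n ω := by
        have := (abs_le.mp hb).1; linarith
      have hf : K < f (x n ω) := hsign1 _ hKu hlt
      have habs : |x n ω - K| = K - x n ω := by
        rw [abs_of_neg (by linarith)]; ring
      have hKxn : (0:ℝ) ≤ K - x n ω := by linarith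
      have hvle : f (x n ω) - K ≤ L * (K - x n ω) := by
        have h2' := le_trans (le_abs_self _) hv
        rwa [habs] at h2'
      rw [habs, hrw, abs_le]
      constructor
      · nlinarith [mul_le_mul_of_nonneg_right hβ2 hKxn,
          mul_le_mul_of_nonneg_right hq1' hKxn,
          mul_nonneg (by linarith : (0:ℝ) ≤ 1 - β) (by linarith : (0:ℝ) ≤ f (x n ω) - K)]
      · nlinarith [mul_le_mul_of_nonneg_left hvle (by linarith : (0:ℝ) ≤ 1 - β),
          mul_le_mul_of_nonneg_right hβ1 hKxn,
          mul_le_mul_of_nonneg_right (show (1:ℝ) - β ≤ 1 - α + l by linarith)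
            (mul_nonneg hL0.le hKxn),
          mul_le_mul_of_nonneg_right hq2' hKxn]
    · rw [hrw, heq, hfK]; simp
    · have hKu : x n ω ≤ K + u₀ := by
        have := (abs_le.mp hb).2; linarith
      have hf : f (x n ω) < K := hsign2 _ hgt hKu
      have habs : |x n ω - K| = x n ω - K := abs_of_pos (by linarith)
      have hKxn : (0:ℝ) ≤ x n ω - K := by linarith
      have hvle : -(f (x n ω) - K) ≤ L * (x n ω - K) := by
        have h2' := le_trans (neg_le_abs _) hv
        rwa [habs] at h2'
      rw [habs, hrw, abs_le]
      constructor
      · nlinarith [mul_le_mul_of_nonneg_left hvle (by linarith : (0:ℝ) ≤ 1 - β),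
          mul_le_mul_of_nonneg_right hβ1 hKxn,
          mul_le_mul_of_nonneg_right (show (1:ℝ) - β ≤ 1 - α + l by linarith)
            (mul_nonneg hL0.le hKxn),
          mul_le_mul_of_nonneg_right hq2' hKxn]
      · nlinarith [mul_le_mul_of_nonneg_right hβ2 hKxn,
          mul_le_mul_of_nonneg_right hq1' hKxn,
          mul_nonneg (by linarith : (0:ℝ) ≤ 1 - β) (by linarith : (0:ℝ) ≤ K - f (x n ω))]
  -- growth within a block
  have hgrow : ∀ s j, j ≤ k - 1 → |x (s*k) ω - K| ≤ δ →
      |x (s*k + j) ω - K| ≤ L ^ j * |x (s*k) ω - K| := by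
    intro s j
    induction j with
    | zero => intro _ _; simp
    | succ j ih =>
      intro hj hs
      have hj' : j ≤ k - 1 := Nat.le_of_succ_le hj
      have hprev := ih hj' hs
      have hLj : L ^ j ≤ L ^ (k-1) := pow_le_pow_right₀ hL hj'
      have hbd : |x (s*k + j) ω - K| ≤ u₀ :=
        le_trans hprev (le_trans
          (mul_le_mul hLj hs (abs_nonneg _) (pow_nonneg hL0.le _)) hKu₀)
      have hnd : ¬ k ∣ (s*k + j + 1) := by
        intro hdvd
        have h1 : k ∣ (j + 1) := by
          have := (Nat.dvd_add_right (dvd_mul_left k s)).mp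
            (by rwa [Nat.add_assoc] at hdvd)
          exact this
        have := Nat.le_of_dvd (Nat.succ_pos j) h1
        omega
      have hst := hstepA (s*k+j) hnd hbd
      calc |x (s*k+(j+1)) ω - K| = |x (s*k+j+1) ω - K| := by rw [Nat.add_assoc]
        _ ≤ L * |x (s*k+j) ω - K| := hst
        _ ≤ L * (L ^ j * |x (s*k) ω - K|) :=
            mul_le_mul_of_nonneg_left hprev hL0.le
        _ = L ^ (j+1) * |x (s*k) ω - K| := by ring
  -- one full block
  have hpulse : ∀ s, |x (s*k) ω - K| ≤ δ →
      |x ((s+1)*k) ω - K| ≤ r * |x (s*k) ω - K| := by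
    intro s hs
    have hgr := hgrow s (k-1) le_rfl hs
    have hbd : |x (s*k + (k-1)) ω - K| ≤ u₀ := by
      refine le_trans hgr (le_trans ?_ hKu₀)
      exact mul_le_mul_of_nonneg_left hs (pow_nonneg hL0.le _)
    have heqn : s*k + (k-1) + 1 = (s+1)*k := by
      rw [Nat.add_assoc, Nat.sub_add_cancel hk, Nat.succ_mul]
    have hdvd : k ∣ (s*k + (k-1) + 1) := by
      rw [heqn]; exact Dvd.intro (s+1) (Nat.mul_comm _ _)
    have hB := hstepB (s*k + (k-1)) hdvd hbd
    rw [heqn] at hB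
    calc |x ((s+1)*k) ω - K| ≤ q * (L ^ (k-1) * |x (s*k) ω - K|) :=
          le_trans hB (mul_le_mul_of_nonneg_left hgr hqpos.le)
      _ = r * |x (s*k) ω - K| := by rw [hrdef]; ring
  -- main induction
  have hmain : ∀ s, |x (s*k) ω - K| ≤ r ^ s * δ := by
    intro s
    induction s with
    | zero => simpa [hx0] using hx₀
    | succ s ih =>
      have hrs : r ^ s ≤ 1 := pow_le_one₀ hrnonneg hr1.le
      have hsδ : |x (s*k) ω - K| ≤ δ := le_trans ih (by nlinarith)
      calc |x ((s+1)*k) ω - K| ≤ r * |x (s*k) ω - K| := hpulse s hsδ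
        _ ≤ r * (r ^ s * δ) := mul_le_mul_of_nonneg_left ih hrnonneg
        _ = r ^ (s+1) * δ := by ring
  -- global bound
  have hall : ∀ n, |x n ω - K| ≤ L ^ (k-1) * δ * r ^ (n / k) := by
    intro n
    have hk0 : 0 < k := hk
    have hn : n / k * k + n % k = n := Nat.div_add_mod' n k
    have hmod : n % k ≤ k - 1 := by
      have := Nat.mod_lt n hk0; omega
    have hmr := hmain (n / k)
    have hrs : r ^ (n/k) ≤ 1 := pow_le_one₀ hrnonneg hr1.le
    have hsδ : |x (n/k*k) ω - K| ≤ δ := le_trans hmr (by nlinarith)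
    have h1' := hgrow (n/k) (n % k) hmod hsδ
    rw [hn] at h1'
    have hLj : L ^ (n % k) ≤ L ^ (k-1) := pow_le_pow_right₀ hL hmod
    calc |x n ω - K| ≤ L ^ (n % k) * |x (n/k*k) ω - K| := h1'
      _ ≤ L ^ (k-1) * (r ^ (n/k) * δ) := by
          apply mul_le_mul hLj hmr (abs_nonneg _) (pow_nonneg hL0.le _)
      _ = L ^ (k-1) * δ * r ^ (n/k) := by ring
  -- conclude
  have hdiv : Tendsto (fun n : ℕ => n / k) atTop atTop :=
    tendsto_atTop_atTop.mpr (fun b => ⟨b * k, fun n hn =>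
      (Nat.le_div_iff_mul_le hk).mpr hn⟩)
  have hrpow : Tendsto (fun n : ℕ => r ^ n) atTop (nhds 0) :=
    tendsto_pow_atTop_nhds_zero_of_lt_one hrnonneg hr1
  have hg : Tendsto (fun n : ℕ => L ^ (k-1) * δ * r ^ (n / k)) atTop (nhds 0) := by
    have := (hrpow.comp hdiv).const_mul (L ^ (k-1) * δ)
    simpa using this
  have h0 : Tendsto (fun n => x n ω - K) atTop (nhds 0) :=
    squeeze_zero_norm (fun n => by simpa [Real.norm_eq_abs] using hall n) hg
  have := h0.add_const K
  simpa using this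
end

section
/- Let (x_n) solve the pulsed stochastic PBC equation, where |f(z+K) − K| ≤ L·|z| for |z| ≤ u₀ (L ≥ 1), f(x) > K for x ∈ [K−u₀, K), f(x) < K for x ∈ (K, K+u₀], and l ∈ (0, min{α, 1−α}). Assume that the random variable max{ln|α + l·ξ|, ln(|1 − α − l·ξ|·L)} is integrable and that −E[max{ln|α + l·ξ|, ln(|1 − α − l·ξ|·L)}] > (k−1)·ln L. Then for every γ ∈ (0,1) there exist δ > 0 and a measurable set Ω_γ ⊆ Ω with P(Ω_γ) > 1−γ such that for every initial value with |x₀ − K| ≤ δ, lim_{n→∞} x_n(ω) = K for every ω ∈ Ω_γ. -/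
open Filter Topology

/-- If averages of partial sums tend to a negative limit, the sums tend to `-∞`. -/
lemma aux_sum_tendsto_atBot {u : ℕ → ℝ} {m : ℝ} (hm : m < 0)
    (h : Tendsto (fun n : ℕ => (n:ℝ)⁻¹ • ∑ i ∈ Finset.range n, u i) atTop (𝓝 m)) :
    Tendsto (fun n => ∑ i ∈ Finset.range n, u i) atTop atBot := by
  have h2 : ∀ᶠ n : ℕ in atTop, (n:ℝ)⁻¹ • ∑ i ∈ Finset.range n, u i < m / 2 :=
    h.eventually (eventually_lt_nhds (by linarith))
  have hlin : Tendsto (fun n : ℕ => (n:ℝ) * (m / 2)) atTop atBot :=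
    Tendsto.atTop_mul_const_of_neg (by linarith) tendsto_natCast_atTop_atTop
  refine tendsto_atBot_mono' _ ?_ hlin
  filter_upwards [h2, eventually_ge_atTop 1] with n hn hn1
  have hn0 : (0:ℝ) < (n:ℝ) := by exact_mod_cast hn1
  have := mul_le_mul_of_nonneg_left hn.le hn0.le
  rw [smul_eq_mul, ← mul_assoc, mul_inv_cancel₀ hn0.ne', one_mul] at this
  linarith [this]

/-- If `p ≤ 0 ≤ q` then `|p + q| ≤ max (-p) q`. -/
lemma aux_abs_add_le {p q : ℝ} (hp : p ≤ 0) (hq : 0 ≤ q) : |p + q| ≤ max (-p) q := by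
  rw [abs_le]
  constructor
  · have := le_max_left (-p) q; linarith
  · have := le_max_right (-p) q; linarith

/-- log of max. -/
lemma aux_log_max {a b : ℝ} (ha : 0 < a) (hb : 0 < b) :
    max (Real.log a) (Real.log b) = Real.log (max a b) := by
  rcases le_total a b with hab | hab
  · rw [max_eq_right hab, max_eq_right ((Real.log_le_log_iff ha hb).mpr hab)]
  · rw [max_eq_left hab, max_eq_left ((Real.log_le_log_iff hb ha).mpr hab)]

lemma aux_pulse {f : ℝ → ℝ} {K u₀ L α l t : ℝ}
    (hfK : f K = K)
    (hLip : ∀ z : ℝ, |z| ≤ u₀ → |f (z + K) - K| ≤ L * |z|)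
    (hsign1 : ∀ x : ℝ, K - u₀ ≤ x → x < K → K < f x)
    (hsign2 : ∀ x : ℝ, K < x → x ≤ K + u₀ → f x < K)
    (ha : 0 ≤ 1 - α - l * t) (hb : 0 ≤ α + l * t)
    (x : ℝ) (hx : |x - K| ≤ u₀) :
    |(1 - α - l * t) * f x + (α + l * t) * x - K|
      ≤ max (α + l * t) ((1 - α - l * t) * L) * |x - K| := by
  set a := 1 - α - l * t with hadef
  set b := α + l * t with hbdef
  have key : (a * f x + b * x - K) = a * (f x - K) + b * (x - K) := by ring
  have hfz : |f x - K| ≤ L * |x - K| := by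
    have := hLip (x - K) hx
    rwa [sub_add_cancel] at this
  rw [key]
  rcases lt_trichotomy x K with hxc | hxc | hxc
  · have hfx : K < f x := hsign1 x (by rw [abs_le] at hx; linarith) hxc
    have h1 : b * (x - K) ≤ 0 := mul_nonpos_of_nonneg_of_nonpos hb (by linarith)
    have h2 : 0 ≤ a * (f x - K) := mul_nonneg ha (by linarith)
    rw [add_comm]
    refine (aux_abs_add_le h1 h2).trans ?_
    have e1 : -(b * (x - K)) = b * |x - K| := by
      rw [abs_of_nonpos (by linarith : x - K ≤ 0)]; ring
    have e2 : a * (f x - K) ≤ a * L * |x - K| := by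
      calc a * (f x - K) ≤ a * |f x - K| := by nlinarith [le_abs_self (f x - K)]
        _ ≤ a * (L * |x - K|) := by nlinarith [abs_nonneg (f x - K)]
        _ = a * L * |x - K| := by ring
    rw [e1]
    refine max_le ?_ ?_
    · exact mul_le_mul_of_nonneg_right (le_max_left _ _) (abs_nonneg _)
    · exact e2.trans (mul_le_mul_of_nonneg_right (le_max_right _ _) (abs_nonneg _))
  · subst hxc
    simp [hfK]
  · have hfx : f x < K := hsign2 x hxc (by rw [abs_le] at hx; linarith)
    have h1 : a * (f x - K) ≤ 0 := mul_nonpos_of_nonneg_of_nonpos ha (by linarith)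
    have h2 : 0 ≤ b * (x - K) := mul_nonneg hb (by linarith)
    refine (aux_abs_add_le h1 h2).trans ?_
    have e2 : -(a * (f x - K)) = a * |f x - K| := by
      rw [abs_of_nonpos (by linarith : f x - K ≤ 0)]; ring
    have e3 : a * |f x - K| ≤ a * L * |x - K| := by
      calc a * |f x - K| ≤ a * (L * |x - K|) := by nlinarith [abs_nonneg (f x - K)]
        _ = a * L * |x - K| := by ring
    rw [e2]
    refine max_le ?_ ?_
    · exact e3.trans (mul_le_mul_of_nonneg_right (le_max_right _ _) (abs_nonneg _))
    · have : b * (x - K) = b * |x - K| := by rw [abs_of_pos (by linarith : 0 < x - K)]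
      rw [this]
      exact mul_le_mul_of_nonneg_right (le_max_left _ _) (abs_nonneg _)

/-- Deterministic convergence lemma, per fixed ω. -/
lemma aux_det_s14 {f : ℝ → ℝ} {K : ℝ} {k : ℕ} (hk : 1 ≤ k) {α u₀ L l : ℝ}
    (hu₀ : 0 < u₀) (hL : 1 ≤ L) (hfK : f K = K)
    (hLip : ∀ z : ℝ, |z| ≤ u₀ → |f (z + K) - K| ≤ L * |z|)
    (hsign1 : ∀ x : ℝ, K - u₀ ≤ x → x < K → K < f x)
    (hsign2 : ∀ x : ℝ, K < x → x ≤ K + u₀ → f x < K)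
    (hα : α ∈ Set.Ico (0:ℝ) 1) (hl : l ∈ Set.Ioo (0:ℝ) (min α (1 - α)))
    (r : ℕ → ℝ) (hr : ∀ n, |r n| ≤ 1)
    (C : ℝ) (hC : 1 ≤ C)
    (hQC : ∀ s : ℕ, (∏ j ∈ Finset.range s,
      (L ^ (k-1) * max (α + l * r ((j+1)*k)) ((1 - α - l * r ((j+1)*k)) * L))) ≤ C)
    (hQ0 : Tendsto (fun s : ℕ => ∏ j ∈ Finset.range s,
      (L ^ (k-1) * max (α + l * r ((j+1)*k)) ((1 - α - l * r ((j+1)*k)) * L)))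
      atTop (𝓝 0))
    (x : ℕ → ℝ)
    (hrec : ∀ n, x (n+1) = if k ∣ (n+1) then
      (1 - α - l * r (n+1)) * f (x n) + (α + l * r (n+1)) * x n else f (x n))
    (hx0 : |x 0 - K| ≤ u₀ / (C * L ^ (k-1))) :
    Tendsto x atTop (𝓝 K) := by
  obtain ⟨hl0, hlm⟩ := hl
  have hlα : l < α := lt_of_lt_of_le hlm (min_le_left _ _)
  have hlα' : l < 1 - α := lt_of_lt_of_le hlm (min_le_right _ _)
  have hab : ∀ t : ℝ, |t| ≤ 1 → 0 < α + l * t ∧ 0 < 1 - α - l * t := by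
    intro t ht
    have h1 : |l * t| ≤ l := by
      rw [abs_mul, abs_of_pos hl0]
      nlinarith [abs_nonneg t]
    rw [abs_le] at h1
    constructor <;> linarith
  have hL0 : (0:ℝ) < L := by linarith
  have hLk : (0:ℝ) < L ^ (k-1) := pow_pos hL0 _
  have hLk1 : (1:ℝ) ≤ L ^ (k-1) := one_le_pow₀ hL
  set δ := u₀ / (C * L ^ (k-1)) with hδdef
  have hCL : 0 < C * L ^ (k-1) := by positivity
  have hδpos : 0 < δ := by positivity
  have hu : δ * (C * L ^ (k-1)) = u₀ := div_mul_cancel₀ _ hCL.ne'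
  set Q : ℕ → ℝ := fun s => ∏ j ∈ Finset.range s,
      (L ^ (k-1) * max (α + l * r ((j+1)*k)) ((1 - α - l * r ((j+1)*k)) * L)) with hQdef
  have hfacpos : ∀ j : ℕ, 0 < L ^ (k-1) * max (α + l * r ((j+1)*k)) ((1 - α - l * r ((j+1)*k)) * L) := by
    intro j
    have := (hab _ (hr ((j+1)*k))).1
    exact mul_pos hLk (lt_max_of_lt_left this)
  have hQpos : ∀ s, 0 < Q s := by
    intro s
    exact Finset.prod_pos fun j _ => hfacpos j
  -- inner: within a block, plain f steps
  have inner : ∀ s : ℕ, |x (s*k) - K| ≤ Q s * δ →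
      ∀ j : ℕ, j ≤ k - 1 → |x (s*k + j) - K| ≤ L ^ j * (Q s * δ) := by
    intro s hs
    intro j
    induction j with
    | zero => intro _; simpa using hs
    | succ j ih =>
      intro hj1
      have hj : j ≤ k - 1 := Nat.le_of_succ_le hj1
      have hprev := ih hj
      have hbd : L ^ j * (Q s * δ) ≤ u₀ := by
        calc L ^ j * (Q s * δ) ≤ L ^ (k-1) * (C * δ) := by
              have h1 : L ^ j ≤ L ^ (k-1) := pow_le_pow_right₀ hL hj
              have h2 : Q s * δ ≤ C * δ := mul_le_mul_of_nonneg_right (hQC s) hδpos.le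
              exact mul_le_mul h1 h2 (mul_nonneg (hQpos s).le hδpos.le) hLk.le
          _ = δ * (C * L ^ (k-1)) := by ring
          _ = u₀ := hu
      have hxu : |x (s*k + j) - K| ≤ u₀ := hprev.trans hbd
      have hndvd : ¬ k ∣ (s*k + j + 1) := by
        intro hdvd
        have h1 : k ∣ s * k := dvd_mul_left k s
        have h2 : k ∣ j + 1 := (Nat.dvd_add_right h1).mp (by rwa [Nat.add_assoc] at hdvd)
        have := Nat.le_of_dvd (Nat.succ_pos j) h2
        omega
      have hstep : x (s*k + j + 1) = f (x (s*k + j)) := by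
        rw [hrec (s*k + j), if_neg hndvd]
      rw [show s*k + (j+1) = s*k + j + 1 from rfl, hstep]
      have hLipj : |f (x (s*k+j)) - K| ≤ L * |x (s*k+j) - K| := by
        have := hLip (x (s*k+j) - K) hxu
        rwa [sub_add_cancel] at this
      calc |f (x (s*k+j)) - K| ≤ L * |x (s*k+j) - K| := hLipj
        _ ≤ L * (L ^ j * (Q s * δ)) := by nlinarith [abs_nonneg (x (s*k+j) - K)]
        _ = L ^ (j+1) * (Q s * δ) := by ring
  -- main block induction
  have main : ∀ s : ℕ, |x (s*k) - K| ≤ Q s * δ := by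
    intro s
    induction s with
    | zero => simpa [hQdef] using hx0
    | succ s ih =>
      have hlast := inner s ih (k-1) le_rfl
      have hbd : L ^ (k-1) * (Q s * δ) ≤ C * L ^ (k-1) * δ := by
        have h2 : Q s * δ ≤ C * δ := mul_le_mul_of_nonneg_right (hQC s) hδpos.le
        calc L ^ (k-1) * (Q s * δ) ≤ L ^ (k-1) * (C * δ) :=
              mul_le_mul_of_nonneg_left h2 hLk.le
          _ = C * L ^ (k-1) * δ := by ring
      have hxu : |x (s*k + (k-1)) - K| ≤ u₀ := by
        refine hlast.trans (hbd.trans ?_)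
        rw [show C * L ^ (k-1) * δ = δ * (C * L ^ (k-1)) from by ring, hu]
      have hN1 : s*k + (k-1) + 1 = (s+1)*k := by
        have : k - 1 + 1 = k := Nat.succ_pred_eq_of_pos hk
        rw [Nat.add_assoc, this]; ring
      have hdvd : k ∣ (s*k + (k-1) + 1) := by
        rw [hN1]; exact Dvd.intro_left (s+1) rfl
      have hstep : x ((s+1)*k) =
          (1 - α - l * r ((s+1)*k)) * f (x (s*k + (k-1))) + (α + l * r ((s+1)*k)) * x (s*k + (k-1)) := by
        rw [← hN1, hrec (s*k + (k-1)), if_pos hdvd, hN1]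
      have hp := aux_pulse hfK hLip hsign1 hsign2
        (hab _ (hr ((s+1)*k))).2.le (hab _ (hr ((s+1)*k))).1.le (x (s*k + (k-1))) hxu
      rw [hstep]
      have hQsucc : Q (s+1) = Q s *
          (L ^ (k-1) * max (α + l * r ((s+1)*k)) ((1 - α - l * r ((s+1)*k)) * L)) := by
        simp [hQdef, Finset.prod_range_succ]
      calc |(1 - α - l * r ((s+1)*k)) * f (x (s*k + (k-1))) + (α + l * r ((s+1)*k)) * x (s*k + (k-1)) - K|
          ≤ max (α + l * r ((s+1)*k)) ((1 - α - l * r ((s+1)*k)) * L) * |x (s*k + (k-1)) - K| := hp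
        _ ≤ max (α + l * r ((s+1)*k)) ((1 - α - l * r ((s+1)*k)) * L) * (L ^ (k-1) * (Q s * δ)) := by
            have hm0 : 0 < max (α + l * r ((s+1)*k)) ((1 - α - l * r ((s+1)*k)) * L) :=
              lt_max_of_lt_left (hab _ (hr ((s+1)*k))).1
            exact mul_le_mul_of_nonneg_left hlast hm0.le
        _ = Q (s+1) * δ := by rw [hQsucc]; ring
  -- squeeze
  have hall : ∀ n : ℕ, |x n - K| ≤ L ^ (k-1) * δ * Q (n / k) := by
    intro n
    have hmod : n % k ≤ k - 1 := by
      have := Nat.mod_lt n (by omega : 0 < k)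
      omega
    have heq : (n / k) * k + n % k = n := by
      rw [Nat.div_add_mod']
    have := inner (n / k) (main (n/k)) (n % k) hmod
    rw [heq] at this
    refine this.trans ?_
    have h1 : L ^ (n % k) ≤ L ^ (k-1) := pow_le_pow_right₀ hL hmod
    calc L ^ (n % k) * (Q (n/k) * δ) ≤ L ^ (k-1) * (Q (n/k) * δ) :=
          mul_le_mul_of_nonneg_right h1 (mul_nonneg (hQpos _).le hδpos.le)
      _ = L ^ (k-1) * δ * Q (n/k) := by ring
  have hdiv : Tendsto (fun n : ℕ => n / k) atTop atTop := by
    have h : Tendsto (fun n : ℕ => n / k) atTop (Filter.map (fun n : ℕ => n / k) atTop) :=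
      tendsto_map
    rwa [Filter.map_div_atTop_eq_nat k (by omega)] at h
  have hg : Tendsto (fun n : ℕ => L ^ (k-1) * δ * Q (n / k)) atTop (𝓝 0) := by
    have := (hQ0.comp hdiv).const_mul (L ^ (k-1) * δ)
    simpa using this
  have hx : Tendsto (fun n => x n - K) atTop (𝓝 0) :=
    squeeze_zero_norm (fun n => by simpa [Real.norm_eq_abs] using hall n) hg
  exact tendsto_sub_nhds_zero_iff.mp hx


open MeasureTheory ProbabilityTheory Filter

/-- Theorem 6, part (ii): stabilization of `K` by pulsed stochastic PBC, for `f` crossing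
the equilibrium `K` from above to below, under
`-E[max{ln|α+lξ|, ln(|1−α−lξ|·L)}] > (k−1) ln L`. -/
theorem stmt_14
    {Ω : Type*} [MeasurableSpace Ω] (P : Measure Ω) [IsProbabilityMeasure P]
    (ξ : ℕ → Ω → ℝ) (ξ0 : Ω → ℝ)
    (hξmeas : ∀ n, Measurable (ξ n)) (hξ0meas : Measurable ξ0)
    (hindep : iIndepFun ξ P)
    (hident : ∀ n, IdentDistrib (ξ n) ξ0 P P)
    (hbound : ∀ n ω, |ξ n ω| ≤ 1) (hbound0 : ∀ ω, |ξ0 ω| ≤ 1)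
    (f : ℝ → ℝ) (hfpos : ∀ x, 0 ≤ f x)
    (K : ℝ) (hKpos : 0 < K) (hfK : f K = K)
    (k : ℕ) (hk : 1 ≤ k)
    (α : ℝ) (hα : α ∈ Set.Ico (0:ℝ) 1)
    (u₀ : ℝ) (hu₀ : 0 < u₀) (L : ℝ) (hL : 1 ≤ L)
    (hLip : ∀ z : ℝ, |z| ≤ u₀ → |f (z + K) - K| ≤ L * |z|)
    (hsign1 : ∀ x : ℝ, K - u₀ ≤ x → x < K → K < f x)
    (hsign2 : ∀ x : ℝ, K < x → x ≤ K + u₀ → f x < K)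
    (l : ℝ) (hl : l ∈ Set.Ioo (0:ℝ) (min α (1 - α)))
    (hint : Integrable
      (fun ω => max (Real.log |α + l * ξ0 ω|) (Real.log (|1 - α - l * ξ0 ω| * L))) P)
    (hexp : -∫ ω, max (Real.log |α + l * ξ0 ω|) (Real.log (|1 - α - l * ξ0 ω| * L)) ∂P
      > ((k : ℝ) - 1) * Real.log L)
    (γ : ℝ) (hγ : γ ∈ Set.Ioo (0:ℝ) 1) :
    ∃ δ > (0:ℝ), ∃ Ωγ : Set Ω, MeasurableSet Ωγ ∧ P Ωγ > ENNReal.ofReal (1 - γ) ∧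
      ∀ x₀ : ℝ, |x₀ - K| ≤ δ →
        ∀ x : ℕ → Ω → ℝ, (∀ ω, x 0 ω = x₀) →
          (∀ n ω, x (n + 1) ω =
            if k ∣ (n + 1) then
              (1 - α - l * ξ (n + 1) ω) * f (x n ω) + (α + l * ξ (n + 1) ω) * x n ω
            else f (x n ω)) →
          ∀ ω ∈ Ωγ, Tendsto (fun n => x n ω) atTop (nhds K) := by
  classical
  obtain ⟨hl0, hlm⟩ := hl
  have hlα : l < α := lt_of_lt_of_le hlm (min_le_left _ _)
  have hlα' : l < 1 - α := lt_of_lt_of_le hlm (min_le_right _ _)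
  have hL0 : (0:ℝ) < L := by linarith
  have hLk : (0:ℝ) < L ^ (k-1) := pow_pos hL0 _
  have hab : ∀ t : ℝ, |t| ≤ 1 → 0 < α + l * t ∧ 0 < 1 - α - l * t := by
    intro t ht
    have h1 : |l * t| ≤ l := by
      rw [abs_mul, abs_of_pos hl0]
      nlinarith [abs_nonneg t]
    rw [abs_le] at h1
    constructor <;> linarith
  set g : ℝ → ℝ := fun t => max (Real.log |α + l * t|) (Real.log (|1 - α - l * t| * L))
    with hgdef
  have hgmeas : Measurable g := by
    apply Measurable.max
    · exact (measurable_const.add (measurable_const.mul measurable_id)).abs.log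
    · exact (((measurable_const.sub (measurable_const.mul measurable_id))).abs.mul
        measurable_const).log
  set X : ℕ → Ω → ℝ := fun j ω => g (ξ ((j+1)*k) ω) with hXdef
  have hident' : ∀ j, IdentDistrib (X j) (fun ω => g (ξ0 ω)) P P :=
    fun j => (hident _).comp hgmeas
  have hXint : Integrable (X 0) P := (hident' 0).integrable_iff.mpr hint
  have hXident : ∀ i, IdentDistrib (X i) (X 0) P P :=
    fun i => (hident' i).trans (hident' 0).symm
  have hXindep : Pairwise (Function.onFun (IndepFun · · P) X) := by
    intro i j hij
    have hne : (i+1)*k ≠ (j+1)*k := by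
      intro h
      have := Nat.eq_of_mul_eq_mul_right (show 0 < k by omega) h
      omega
    exact (hindep.indepFun hne).comp hgmeas hgmeas
  have hslln := ProbabilityTheory.strong_law_ae X hXint hXindep hXident
  have hmean : (∫ ω, X 0 ω ∂P) = ∫ ω, g (ξ0 ω) ∂P := (hident' 0).integral_eq
  set c : ℝ := ((k:ℝ) - 1) * Real.log L with hcdef
  have hm' : (∫ ω, g (ξ0 ω) ∂P) + c < 0 := by
    have : -∫ ω, g (ξ0 ω) ∂P > c := hexp
    linarith
  -- log of the per-block factor
  have hlogfac : ∀ t : ℝ, |t| ≤ 1 →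
      g t + c = Real.log (L ^ (k-1) * max (α + l * t) ((1 - α - l * t) * L)) := by
    intro t ht
    obtain ⟨hb, ha⟩ := hab t ht
    have haL : 0 < (1 - α - l * t) * L := mul_pos ha hL0
    have h1 : g t = Real.log (max (α + l * t) ((1 - α - l * t) * L)) := by
      rw [hgdef]
      simp only
      rw [abs_of_pos hb, abs_of_pos ha]
      exact aux_log_max hb haL
    have h2 : c = Real.log (L ^ (k-1)) := by
      rw [Real.log_pow, hcdef]
      congr 1
      have : ((k - 1 : ℕ) : ℝ) = (k : ℝ) - 1 := by
        have := hk
        push_cast [Nat.cast_sub hk]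
        ring
      rw [this]
    rw [h1, h2, ← Real.log_mul (lt_max_of_lt_left hb).ne' hLk.ne', mul_comm]
  -- the random products
  set Qf : ℕ → Ω → ℝ := fun s ω => ∏ j ∈ Finset.range s,
      (L ^ (k-1) * max (α + l * ξ ((j+1)*k) ω) ((1 - α - l * ξ ((j+1)*k) ω) * L))
    with hQfdef
  have hQfmeas : ∀ s, Measurable (Qf s) := by
    intro s
    apply Finset.measurable_prod
    intro j _
    apply measurable_const.mul
    apply Measurable.max
    · exact measurable_const.add (measurable_const.mul (hξmeas _))
    · exact (measurable_const.sub (measurable_const.mul (hξmeas _))).mul measurable_const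
  have hQfpos : ∀ s ω, 0 < Qf s ω := by
    intro s ω
    exact Finset.prod_pos fun j _ =>
      mul_pos hLk (lt_max_of_lt_left (hab _ (hbound _ ω)).1)
  -- a.e. convergence of the products to 0
  have hae : ∀ᵐ ω ∂P, Tendsto (fun s => Qf s ω) atTop (𝓝 0) := by
    filter_upwards [hslln] with ω hω
    rw [hmean] at hω
    have hshift : Tendsto (fun n : ℕ => (n:ℝ)⁻¹ • ∑ i ∈ Finset.range n, (X i ω + c))
        atTop (𝓝 ((∫ ω, g (ξ0 ω) ∂P) + c)) := by
      refine Tendsto.congr' ?_ (hω.add_const c)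
      filter_upwards [eventually_ge_atTop 1] with n hn
      have hn0 : (n:ℝ) ≠ 0 := by positivity
      rw [Finset.sum_add_distrib, smul_eq_mul, smul_eq_mul, mul_add, Finset.sum_const,
        Finset.card_range, nsmul_eq_mul, ← mul_assoc, inv_mul_cancel₀ hn0, one_mul]
    have hsum : Tendsto (fun n : ℕ => ∑ i ∈ Finset.range n, (X i ω + c)) atTop atBot :=
      aux_sum_tendsto_atBot hm' hshift
    have hQlog : ∀ s : ℕ, Qf s ω = Real.exp (∑ i ∈ Finset.range s, (X i ω + c)) := by
      intro s
      have h1 : ∀ j ∈ Finset.range s, X j ω + c =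
          Real.log (L ^ (k-1) * max (α + l * ξ ((j+1)*k) ω) ((1 - α - l * ξ ((j+1)*k) ω) * L)) :=
        fun j _ => hlogfac _ (hbound _ ω)
      rw [Finset.sum_congr rfl h1, ← Real.log_prod]
      · rw [Real.exp_log (hQfpos s ω)]
      · intro j _
        exact (mul_pos hLk (lt_max_of_lt_left (hab _ (hbound _ ω)).1)).ne'
    have := Real.tendsto_exp_atBot.comp hsum
    refine this.congr fun s => ?_
    exact (hQlog s).symm
  -- the events
  set D : Set Ω := {ω | Tendsto (fun s => Qf s ω) atTop (𝓝 0)} with hDdef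
  have hDmeas : MeasurableSet D := measurableSet_tendsto (𝓝 (0:ℝ)) hQfmeas
  have hDone : P D = 1 := by
    rw [← prob_compl_eq_zero_iff hDmeas]
    simpa [ae_iff, hDdef, Set.compl_setOf] using hae
  set B : ℕ → Set Ω := fun C => ⋂ s, {ω | Qf s ω ≤ (C:ℝ)} with hBdef
  have hBmeas : ∀ C, MeasurableSet (B C) :=
    fun C => MeasurableSet.iInter fun s => measurableSet_le (hQfmeas s) measurable_const
  have hBmono : Monotone B := by
    intro C C' hCC' ω hω
    simp only [hBdef, Set.mem_iInter, Set.mem_setOf_eq] at hω ⊢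
    intro s
    exact le_trans (hω s) (by exact_mod_cast hCC')
  have hDsub : D ⊆ ⋃ C, B C := by
    intro ω hω
    have hbdd : BddAbove (Set.range fun s => Qf s ω) := hω.bddAbove_range
    obtain ⟨b, hb⟩ := hbdd
    obtain ⟨C, hC⟩ := exists_nat_ge b
    refine Set.mem_iUnion.mpr ⟨C, ?_⟩
    refine Set.mem_iInter.mpr fun s => ?_
    exact le_trans (hb ⟨s, rfl⟩) hC
  have hUone : P (⋃ C, B C) = 1 := by
    refine le_antisymm prob_le_one ?_
    calc (1:ENNReal) = P D := hDone.symm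
      _ ≤ P (⋃ C, B C) := measure_mono hDsub
  have htend : Tendsto (fun C => P (B C)) atTop (𝓝 1) := by
    have := tendsto_measure_iUnion_atTop (μ := P) hBmono
    rwa [hUone] at this
  have hlt1 : ENNReal.ofReal (1 - γ) < 1 := by
    rw [ENNReal.ofReal_lt_one]
    linarith [hγ.1]
  obtain ⟨C, hC⟩ := (htend.eventually (eventually_gt_nhds hlt1)).exists
  set Creal : ℝ := max (C:ℝ) 1 with hCrealdef
  have hCreal1 : (1:ℝ) ≤ Creal := le_max_right _ _
  refine ⟨u₀ / (Creal * L ^ (k-1)), by positivity, B C ∩ D,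
    (hBmeas C).inter hDmeas, ?_, ?_⟩
  · rwa [measure_inter_conull (by rwa [prob_compl_eq_zero_iff hDmeas])]
  · intro x₀ hx₀ x hx0 hxrec ω hω
    obtain ⟨hωB, hωD⟩ := hω
    refine aux_det_s14 hk hu₀ hL hfK hLip hsign1 hsign2 hα ⟨hl0, hlm⟩
      (fun n => ξ n ω) (fun n => hbound n ω) Creal hCreal1 ?_ ?_ (fun n => x n ω)
      (fun n => hxrec n ω) ?_
    · intro s
      exact le_trans (Set.mem_iInter.mp hωB s) (le_max_left _ _)
    · exact hωD
    · simpa [hx0 ω] using hx₀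
end
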